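/- arXiv:0910.3024 — 7 statements merged into one kernel-verified Lean document; each statement's English description precedes it below -/
import Mathlib

section
/- For every field K of characteristic zero (take K = ℚ) and all natural numbers n and d, consider the K-vector space with basis the set of functions z : Fin d → Fin n (i.e., the finitely supported functions (Fin d → Fin n) →₀ K), on which the symmetric group Perm(Fin n) acts linearly by permuting basis vectors via postcomposition: σ • e_z = e_{σ ∘ z}. For each set partition A of Fin d with at most n blocks, let m_A := Σ_{z : τ(z) = A} e_z. Then the family (m_A), indexed by set partitions A of Fin d with at most n blocks, is a basis of the submodule of Perm(Fin n)-fixed vectors. -/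
/-- A set partition of `Fin d`: a finite collection of pairwise disjoint nonempty
subsets (blocks) of `Fin d` whose union is all of `Fin d`; equivalently, every
element lies in exactly one block and the empty set is not a block. -/
def IsSetPartition {d : ℕ} (P : Finset (Finset (Fin d))) : Prop :=
  ∅ ∉ P ∧ ∀ i : Fin d, ∃! B, B ∈ P ∧ i ∈ B

/-- The type `τ(z)` of a function `z : Fin d → Fin n`: the set partition of `Fin d`
whose blocks are the nonempty fibers of `z`. -/
def fiberPartition {n d : ℕ} (z : Fin d → Fin n) : Finset (Finset (Fin d)) :=
  (Finset.univ.image fun x => Finset.univ.filter fun i => z i = x).erase ∅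

/-- `m_A := Σ_{z : τ(z) = A} e_z` inside the vector space with basis the functions
`z : Fin d → Fin n`. -/
noncomputable def mA (n d : ℕ) (P : Finset (Finset (Fin d))) : (Fin d → Fin n) →₀ ℚ :=
  ∑ z ∈ Finset.univ.filter (fun z : Fin d → Fin n => fiberPartition z = P),
    Finsupp.single z 1

/-- The submodule of vectors fixed by the action of `Perm (Fin n)` permuting the basis
vectors via postcomposition `σ • e_z = e_{σ ∘ z}`. -/
noncomputable def fixedSubmodule (n d : ℕ) : Submodule ℚ ((Fin d → Fin n) →₀ ℚ) where
  carrier := {f | ∀ σ : Equiv.Perm (Fin n), Finsupp.mapDomain (fun z => σ ∘ z) f = f}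
  add_mem' := by
    intro a b ha hb σ
    rw [Finsupp.mapDomain_add, ha σ, hb σ]
  zero_mem' := by
    intro σ
    simp
  smul_mem' := by
    intro c f hf σ
    rw [Finsupp.mapDomain_smul, hf σ]

abbrev fib {n d : ℕ} (z : Fin d → Fin n) (x : Fin n) : Finset (Fin d) :=
  Finset.univ.filter fun i => z i = x

lemma mem_fiberPartition {n d : ℕ} {z : Fin d → Fin n} {B : Finset (Fin d)} :
    B ∈ fiberPartition z ↔ B ≠ ∅ ∧ ∃ x, fib z x = B := by
  constructor
  · rintro hB
    rw [fiberPartition, Finset.mem_erase, Finset.mem_image] at hB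
    obtain ⟨hne, x, -, rfl⟩ := hB
    exact ⟨hne, x, rfl⟩
  · rintro ⟨hne, x, rfl⟩
    rw [fiberPartition, Finset.mem_erase, Finset.mem_image]
    exact ⟨hne, x, Finset.mem_univ x, rfl⟩

lemma isSetPartition_fiberPartition {n d : ℕ} (z : Fin d → Fin n) :
    IsSetPartition (fiberPartition z) := by
  constructor
  · exact Finset.notMem_erase _ _
  · intro i
    refine ⟨fib z (z i), ⟨mem_fiberPartition.mpr ⟨?_, z i, rfl⟩, by simp⟩, ?_⟩
    · intro h
      have : i ∈ fib z (z i) := by simp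
      simp [h] at this
    · rintro B ⟨hB, hiB⟩
      obtain ⟨-, x, rfl⟩ := mem_fiberPartition.mp hB
      simp only [Finset.mem_filter] at hiB
      rw [← hiB.2]

lemma card_fiberPartition_le {n d : ℕ} (z : Fin d → Fin n) :
    (fiberPartition z).card ≤ n := by
  calc (fiberPartition z).card ≤ (Finset.univ.image fun x => fib z x).card :=
        Finset.card_le_card (Finset.erase_subset _ _)
    _ ≤ Finset.univ.card := Finset.card_image_le
    _ = n := by simp

lemma mA_apply (n d : ℕ) (P : Finset (Finset (Fin d))) (z : Fin d → Fin n) :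
    mA n d P z = if fiberPartition z = P then 1 else 0 := by
  rw [mA, Finsupp.finset_sum_apply]
  simp only [Finsupp.single_apply]
  rw [Finset.sum_ite_eq' (Finset.filter (fun z => fiberPartition z = P) Finset.univ) z (fun _ => (1:ℚ))]
  simp

lemma fiberPartition_comp {n d : ℕ} (σ : Equiv.Perm (Fin n)) (z : Fin d → Fin n) :
    fiberPartition (σ ∘ z) = fiberPartition z := by
  have h : ∀ x, fib (σ ∘ z) x = fib z (σ.symm x) := by
    intro x
    ext i
    simp [Equiv.eq_symm_apply, eq_comm]
  ext B
  rw [mem_fiberPartition, mem_fiberPartition]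
  constructor
  · rintro ⟨hne, x, rfl⟩; exact ⟨hne, σ.symm x, (h x).symm⟩
  · rintro ⟨hne, x, rfl⟩; exact ⟨hne, σ x, by rw [h, Equiv.symm_apply_apply]⟩

lemma exists_rep {n d : ℕ} {P : Finset (Finset (Fin d))} (hP : IsSetPartition P)
    (hc : P.card ≤ n) : ∃ z : Fin d → Fin n, fiberPartition z = P := by
  obtain ⟨g⟩ : Nonempty ({B // B ∈ P} ↪ Fin n) := by
    apply Function.Embedding.nonempty_of_card_le
    simpa using hc
  -- block of i
  have hblock := fun i => (hP.2 i).choose_spec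
  set blk : Fin d → Finset (Fin d) := fun i => (hP.2 i).choose with hblk
  have hmem : ∀ i, blk i ∈ P := fun i => (hblock i).1.1
  have hin : ∀ i, i ∈ blk i := fun i => (hblock i).1.2
  have huniq : ∀ i B, B ∈ P → i ∈ B → B = blk i := fun i B h1 h2 => (hblock i).2 B ⟨h1, h2⟩
  set z : Fin d → Fin n := fun i => g ⟨blk i, hmem i⟩ with hz
  refine ⟨z, ?_⟩
  have hfib : ∀ i : Fin d, fib z (z i) = blk i := by
    intro i
    ext j
    simp only [Finset.mem_filter, Finset.mem_univ, true_and, hz]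
    constructor
    · intro hj
      have : blk j = blk i := Subtype.ext_iff.mp (g.injective hj)
      rw [← this]; exact hin j
    · intro hj
      exact congrArg _ (Subtype.ext ((huniq j (blk i) (hmem i) hj)).symm)
  ext B
  rw [mem_fiberPartition]
  constructor
  · rintro ⟨hne, x, rfl⟩
    obtain ⟨i, hi⟩ := Finset.nonempty_iff_ne_empty.mpr hne
    have hx : z i = x := (Finset.mem_filter.mp hi).2
    rw [← hx, hfib i]
    exact hmem i
  · intro hB
    have hne : B ≠ ∅ := fun h => hP.1 (h ▸ hB)
    obtain ⟨i, hi⟩ := Finset.nonempty_iff_ne_empty.mpr hne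
    have : B = blk i := huniq i B hB hi
    exact ⟨hne, z i, by rw [hfib i, this]⟩

open Classical in
lemma exists_perm_comp {n d : ℕ} {z z' : Fin d → Fin n}
    (h : fiberPartition z = fiberPartition z') :
    ∃ σ : Equiv.Perm (Fin n), σ ∘ z = z' := by
  classical
  set p : Fin n → Prop := fun x => (fib z x).Nonempty with hp
  set q : Fin n → Prop := fun y => (fib z' y).Nonempty with hq
  -- transfer: nonempty fiber of z equals a fiber of z'
  have key : ∀ x, p x → ∃ y, q y ∧ fib z' y = fib z x := by
    intro x hx
    have : fib z x ∈ fiberPartition z' := by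
      rw [← h, mem_fiberPartition]
      exact ⟨Finset.nonempty_iff_ne_empty.mp hx, x, rfl⟩
    obtain ⟨hne, y, hy⟩ := mem_fiberPartition.mp this
    refine ⟨y, ?_, hy⟩
    show (fib z' y).Nonempty
    rw [hy]; exact Finset.nonempty_iff_ne_empty.mpr hne
  have key' : ∀ y, q y → ∃ x, p x ∧ fib z x = fib z' y := by
    intro y hy
    have : fib z' y ∈ fiberPartition z := by
      rw [h, mem_fiberPartition]
      exact ⟨Finset.nonempty_iff_ne_empty.mp hy, y, rfl⟩
    obtain ⟨hne, x, hx⟩ := mem_fiberPartition.mp this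
    refine ⟨x, ?_, hx⟩
    show (fib z x).Nonempty
    rw [hx]; exact Finset.nonempty_iff_ne_empty.mpr hne
  have uni : ∀ (w : Fin d → Fin n) (a b : Fin n), fib w a = fib w b → (fib w a).Nonempty → a = b := by
    intro w a b hab hne
    obtain ⟨i, hi⟩ := hne
    have h1 : w i = a := (Finset.mem_filter.mp hi).2
    have hi2 := hi
    rw [hab] at hi2
    have h2 : w i = b := (Finset.mem_filter.mp hi2).2
    rw [← h1, h2]
  set F : {x // p x} → {y // q y} := fun x =>
    ⟨(key x.1 x.2).choose, ((key x.1 x.2).choose_spec).1⟩ with hF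
  set G : {y // q y} → {x // p x} := fun y =>
    ⟨(key' y.1 y.2).choose, ((key' y.1 y.2).choose_spec).1⟩ with hG
  have hFfib : ∀ x : {x // p x}, fib z' (F x).1 = fib z x.1 :=
    fun x => ((key x.1 x.2).choose_spec).2
  have hGfib : ∀ y : {y // q y}, fib z (G y).1 = fib z' y.1 :=
    fun y => ((key' y.1 y.2).choose_spec).2
  have hli : ∀ x, G (F x) = x := fun x =>
    Subtype.ext (uni z _ _ (by rw [hGfib, hFfib]) (by rw [hGfib, hFfib]; exact x.2))
  have hri : ∀ y, F (G y) = y := fun y =>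
    Subtype.ext (uni z' _ _ (by rw [hFfib, hGfib]) (by rw [hFfib, hGfib]; exact y.2))
  set e1 : {x // p x} ≃ {y // q y} := ⟨F, G, hli, hri⟩ with he1
  have e2 : {x // ¬ p x} ≃ {y // ¬ q y} := by
    apply Classical.choice
    apply Fintype.card_eq.mp
    rw [Fintype.card_subtype_compl, Fintype.card_subtype_compl, Fintype.card_congr e1]
  refine ⟨(Equiv.sumCompl p).symm.trans ((e1.sumCongr e2).trans (Equiv.sumCompl q)), ?_⟩
  funext i
  have hpi : p (z i) := ⟨i, by simp⟩
  simp only [Function.comp_apply, Equiv.trans_apply]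
  have hsym : (Equiv.sumCompl p).symm (z i) = Sum.inl ⟨z i, hpi⟩ := by
    rw [Equiv.symm_apply_eq]; simp
  rw [hsym]
  simp only [he1, Equiv.sumCongr_apply, Sum.map_inl, Equiv.sumCompl_apply_inl, Equiv.coe_fn_mk]
  have := hFfib ⟨z i, hpi⟩
  have hi : i ∈ fib z' (F ⟨z i, hpi⟩).1 := by rw [this]; simp
  exact ((Finset.mem_filter.mp hi).2).symm

lemma mA_mem_fixed (n d : ℕ) (P : Finset (Finset (Fin d))) :
    mA n d P ∈ fixedSubmodule n d := by
  intro σ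
  rw [mA, Finsupp.mapDomain_finset_sum]
  simp only [Finsupp.mapDomain_single]
  apply Finset.sum_nbij' (fun z => σ ∘ z) (fun z => σ.symm ∘ z)
  · intro a ha
    simp only [Finset.mem_filter, Finset.mem_univ, true_and] at ha ⊢
    rw [fiberPartition_comp, ha]
  · intro a ha
    simp only [Finset.mem_filter, Finset.mem_univ, true_and] at ha ⊢
    rw [fiberPartition_comp, ha]
  · intro a _; ext i; simp
  · intro a _; ext i; simp
  · intro a _; rfl


/-- The family `(m_A)`, indexed by set partitions `A` of `Fin d` with at most `n` blocks,
is a basis of the submodule of `Perm (Fin n)`-fixed vectors. -/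
theorem stmt0 (n d : ℕ) :
    ∃ b : Module.Basis {P : Finset (Finset (Fin d)) // IsSetPartition P ∧ P.card ≤ n} ℚ
      (fixedSubmodule n d),
      ∀ P, (b P : (Fin d → Fin n) →₀ ℚ) = mA n d P.val := by
  classical
  set I := {P : Finset (Finset (Fin d)) // IsSetPartition P ∧ P.card ≤ n} with hI
  haveI : Fintype I := Fintype.ofFinite _
  set rep : I → (Fin d → Fin n) := fun P => (exists_rep P.2.1 P.2.2).choose with hrep
  have hrepspec : ∀ P : I, fiberPartition (rep P) = P.1 :=
    fun P => (exists_rep P.2.1 P.2.2).choose_spec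
  set v : I → fixedSubmodule n d := fun P => ⟨mA n d P.1, mA_mem_fixed n d P.1⟩ with hv
  -- evaluation of a combination
  have combo_eval : ∀ (g : I → ℚ) (z : Fin d → Fin n),
      (∑ P : I, g P • mA n d P.1) z
        = g ⟨fiberPartition z, isSetPartition_fiberPartition z, card_fiberPartition_le z⟩ := by
    intro g z
    set P0 : I := ⟨fiberPartition z, isSetPartition_fiberPartition z,
      card_fiberPartition_le z⟩ with hP0
    rw [Finsupp.finset_sum_apply]
    have : ∀ P : I, (g P • mA n d P.1) z = if P = P0 then g P else 0 := by
      intro P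
      rw [Finsupp.smul_apply, mA_apply]
      by_cases hPP : P = P0
      · have hfz : fiberPartition z = P.1 := by rw [hPP]
        rw [if_pos hfz, if_pos hPP, smul_eq_mul, mul_one]
      · have hfz : ¬ (fiberPartition z = P.1) := fun h => hPP (Subtype.ext h.symm)
        rw [if_neg hfz, if_neg hPP, smul_eq_mul, mul_zero]
    simp only [this]
    convert Fintype.sum_ite_eq' P0 g
  have combo_eval' : ∀ (g : I → ℚ) (P0 : I),
      (∑ P : I, g P • mA n d P.1) (rep P0) = g P0 := by
    intro g P0
    rw [combo_eval g (rep P0)]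
    congr 1
    exact Subtype.ext (hrepspec P0)
  have li : LinearIndependent ℚ v := by
    apply LinearIndependent.of_comp (fixedSubmodule n d).subtype
    rw [Fintype.linearIndependent_iff]
    intro g hg P
    have := congrArg (fun f => f (rep P)) hg
    simp only [Submodule.coe_subtype, Function.comp] at this
    rw [combo_eval' g P] at this
    simpa using this
  have span : ⊤ ≤ Submodule.span ℚ (Set.range v) := by
    rintro ⟨f, hf⟩ -
    have hfev : ∀ z z' : Fin d → Fin n, fiberPartition z = fiberPartition z' → f z = f z' := by
      intro z z' hzz
      obtain ⟨σ, hσ⟩ := exists_perm_comp hzz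
      have hfix := hf σ
      have hinj : Function.Injective (fun w : Fin d → Fin n => σ ∘ w) :=
        fun a b hab => funext fun i => σ.injective (congrFun hab i)
      calc f z = Finsupp.mapDomain (fun w : Fin d → Fin n => σ ∘ w) f (σ ∘ z) :=
            (Finsupp.mapDomain_apply hinj f z).symm
        _ = Finsupp.mapDomain (fun w : Fin d → Fin n => σ ∘ w) f z' := by rw [hσ]
        _ = f z' := by rw [hfix]
    have key : f = ∑ P : I, f (rep P) • mA n d P.1 := by
      ext z
      rw [combo_eval (fun P => f (rep P))]
      have h1 : fiberPartition (rep ⟨fiberPartition z, isSetPartition_fiberPartition z,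
          card_fiberPartition_le z⟩) = fiberPartition z :=
        hrepspec ⟨fiberPartition z, isSetPartition_fiberPartition z, card_fiberPartition_le z⟩
      exact hfev z _ h1.symm
    have coe_eq : ((∑ P : I, f (rep P) • v P : fixedSubmodule n d) : (Fin d → Fin n) →₀ ℚ)
        = ∑ P : I, f (rep P) • mA n d P.1 := by
      push_cast
      rfl
    have : (⟨f, hf⟩ : fixedSubmodule n d) = ∑ P : I, f (rep P) • v P :=
      Subtype.ext (key.trans coe_eq.symm)
    rw [this]
    exact Submodule.sum_mem _ fun P _ =>
      Submodule.smul_mem _ _ (Submodule.subset_span (Set.mem_range_self P))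
  refine ⟨Module.Basis.mk li span, fun P => ?_⟩
  rw [Module.Basis.mk_apply]
end

section
/- For every natural number n, all coefficients of the formal power series (Σ_{d ≥ 0} B_d^{(n)}·X^d) · ∏_{i=1}^{n} (1 − X^i) in ℤ⟦X⟧ are nonnegative. -/
/-- `B_d^{(n)}`: the restricted Bell number, i.e. the number of set partitions of
`Fin d` with at most `n` blocks (`B_0^{(n)} = 1`). -/
noncomputable def bellRestricted (n d : ℕ) : ℕ :=
  Nat.card {P : Finset (Finset (Fin d)) // IsSetPartition P ∧ P.card ≤ n}


open Finset

namespace SPaux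
variable {d : ℕ}

lemma block_eq_of_mem {P : Finset (Finset (Fin d))} (hP : IsSetPartition P)
    {B C : Finset (Fin d)} (hB : B ∈ P) (hC : C ∈ P) {i : Fin d}
    (hiB : i ∈ B) (hiC : i ∈ C) : B = C := by
  obtain ⟨D, _, hu⟩ := hP.2 i
  rw [hu B ⟨hB, hiB⟩, hu C ⟨hC, hiC⟩]

lemma block_ne_empty {P : Finset (Finset (Fin d))} (hP : IsSetPartition P)
    {B : Finset (Fin d)} (hB : B ∈ P) : B ≠ ∅ := by
  rintro rfl; exact hP.1 hB

def up (B : Finset (Fin d)) : Finset (Fin (d+1)) := B.image Fin.castSucc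

def down (B : Finset (Fin (d+1))) : Finset (Fin d) :=
  univ.filter (fun i => i.castSucc ∈ B)

@[simp] lemma mem_down {B : Finset (Fin (d+1))} {i : Fin d} :
    i ∈ down B ↔ i.castSucc ∈ B := by simp [down]

@[simp] lemma castSucc_mem_up {B : Finset (Fin d)} {i : Fin d} :
    i.castSucc ∈ up B ↔ i ∈ B := by
  simp [up, (Fin.castSucc_injective d).eq_iff]

lemma last_not_mem_up {B : Finset (Fin d)} : Fin.last d ∉ up B := by
  simp only [up, mem_image]
  rintro ⟨y, -, h⟩
  exact absurd h (Fin.castSucc_lt_last y).ne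

@[simp] lemma down_up (B : Finset (Fin d)) : down (up B) = B := by
  ext i; simp

lemma up_down (B : Finset (Fin (d+1))) : up (down B) = B.erase (Fin.last d) := by
  ext x
  simp only [up, mem_image, mem_down, mem_erase]
  constructor
  · rintro ⟨y, hy, rfl⟩
    exact ⟨(Fin.castSucc_lt_last y).ne, hy⟩
  · rintro ⟨hne, hx⟩
    obtain ⟨y, rfl⟩ := Fin.exists_castSucc_eq.2 hne
    exact ⟨y, hx, rfl⟩

lemma up_injective : Function.Injective (up (d := d)) := by
  intro B C h
  have := congrArg down h
  simpa using this

@[simp] lemma up_eq_empty {B : Finset (Fin d)} : up B = ∅ ↔ B = ∅ := by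
  constructor
  · intro h
    have := congrArg down h
    rw [down_up] at this
    simpa [down] using this
  · rintro rfl; simp [up]

@[simp] lemma down_insert_last (B : Finset (Fin (d+1))) :
    down (insert (Fin.last d) B) = down B := by
  ext i
  simp only [mem_down, mem_insert]
  constructor
  · rintro (h | h)
    · exact absurd h (Fin.castSucc_lt_last i).ne
    · exact h
  · exact Or.inr

lemma down_ne_empty {B : Finset (Fin (d+1))} (hne : B ≠ ∅)
    (hlast : Fin.last d ∉ B) : down B ≠ ∅ := by
  obtain ⟨x, hx⟩ := Finset.nonempty_iff_ne_empty.2 hne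
  have hxne : x ≠ Fin.last d := by rintro rfl; exact hlast hx
  obtain ⟨y, rfl⟩ := Fin.exists_castSucc_eq.2 hxne
  intro h
  have : y ∈ down B := by simpa using hx
  simp [h] at this

lemma up_down_of_last_not_mem {B : Finset (Fin (d+1))} (h : Fin.last d ∉ B) :
    up (down B) = B := by
  rw [up_down, Finset.erase_eq_of_notMem h]

/-- Lift a partition `P` of `Fin d` to a partition of `Fin (d+1)`, putting `last`
into block `B` (if `B = ∅`, `last` becomes a singleton block). -/
def lift (P : Finset (Finset (Fin d))) (B : Finset (Fin d)) :
    Finset (Finset (Fin (d+1))) :=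
  insert (insert (Fin.last d) (up B)) ((P.erase B).image up)

variable {P : Finset (Finset (Fin d))} {B : Finset (Fin d)}

lemma top_not_mem_image (hP : IsSetPartition P) :
    insert (Fin.last d) (up B) ∉ (P.erase B).image up := by
  simp only [mem_image]
  rintro ⟨C, hC, hCeq⟩
  have : Fin.last d ∈ up C := hCeq ▸ Finset.mem_insert_self _ _
  exact last_not_mem_up this

lemma lift_isSetPartition (hP : IsSetPartition P) (hB : B ∈ P ∨ B = ∅) :
    IsSetPartition (lift P B) := by
  constructor
  · simp only [lift, mem_insert, mem_image]
    rintro (h | ⟨C, hC, hCeq⟩)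
    · exact absurd h.symm (Finset.insert_ne_empty _ _)
    · exact block_ne_empty hP (Finset.mem_of_mem_erase hC) (up_eq_empty.1 hCeq)
  · intro i
    induction i using Fin.lastCases with
    | last =>
      refine ⟨insert (Fin.last d) (up B), ⟨Finset.mem_insert_self _ _, Finset.mem_insert_self _ _⟩, ?_⟩
      rintro D ⟨hD, hlastD⟩
      rcases Finset.mem_insert.1 hD with h | h
      · exact h
      · obtain ⟨C, _, rfl⟩ := mem_image.1 h
        exact absurd hlastD last_not_mem_up
    | cast y =>
      obtain ⟨By, ⟨hByP, hyBy⟩, huniq⟩ := hP.2 y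
      by_cases hyB : y ∈ B
      · -- unique block is the top block
        have hBP : B ∈ P := by
          rcases hB with h | rfl
          · exact h
          · exact absurd hyB (Finset.notMem_empty y)
        refine ⟨insert (Fin.last d) (up B),
          ⟨Finset.mem_insert_self _ _, Finset.mem_insert_of_mem (castSucc_mem_up.2 hyB)⟩, ?_⟩
        rintro D ⟨hD, hyD⟩
        rcases Finset.mem_insert.1 hD with h | h
        · exact h
        · obtain ⟨C, hC, rfl⟩ := mem_image.1 h
          have hyC : y ∈ C := castSucc_mem_up.1 hyD
          have hCP : C ∈ P := Finset.mem_of_mem_erase hC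
          have : C = B := block_eq_of_mem hP hCP hBP hyC hyB
          exact absurd this (Finset.ne_of_mem_erase hC)
      · -- unique block is `up By`
        have hByB : By ≠ B := by rintro rfl; exact hyB hyBy
        refine ⟨up By,
          ⟨Finset.mem_insert_of_mem (mem_image_of_mem up (Finset.mem_erase.2 ⟨hByB, hByP⟩)),
            castSucc_mem_up.2 hyBy⟩, ?_⟩
        rintro D ⟨hD, hyD⟩
        rcases Finset.mem_insert.1 hD with h | h
        · subst h
          rcases Finset.mem_insert.1 hyD with h' | h'
          · exact absurd h' (Fin.castSucc_lt_last y).ne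
          · exact absurd (castSucc_mem_up.1 h') hyB
        · obtain ⟨C, hC, rfl⟩ := mem_image.1 h
          have hyC : y ∈ C := castSucc_mem_up.1 hyD
          congr 1
          exact huniq C ⟨Finset.mem_of_mem_erase hC, hyC⟩

lemma lift_card (hP : IsSetPartition P) (hB : B ∈ P ∨ B = ∅) :
    (lift P B).card = if B = ∅ then P.card + 1 else P.card := by
  have hni := top_not_mem_image (B := B) hP
  have hcard : ((P.erase B).image up).card = (P.erase B).card :=
    Finset.card_image_of_injective _ up_injective
  rw [lift, Finset.card_insert_of_notMem hni, hcard]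
  rcases hB with h | rfl
  · rw [if_neg (block_ne_empty hP h), Finset.card_erase_of_mem h]
    have : 1 ≤ P.card := Finset.card_pos.2 ⟨B, h⟩
    omega
  · rw [if_pos rfl, Finset.erase_eq_of_notMem hP.1]

lemma image_down_lift (hP : IsSetPartition P) (hB : B ∈ P ∨ B = ∅) :
    ((lift P B).image down).erase ∅ = P := by
  have h1 : down (insert (Fin.last d) (up B)) = B := by
    rw [down_insert_last, down_up]
  rw [lift, Finset.image_insert, h1, Finset.image_image]
  have h2 : (P.erase B).image (down ∘ up) = P.erase B := by
    apply Finset.image_congr (g := id) ?_ |>.trans (Finset.image_id)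
    intro C _; simp
  rw [h2]
  rcases hB with h | rfl
  · rw [Finset.insert_erase h, Finset.erase_eq_of_notMem hP.1]
  · rw [Finset.erase_eq_of_notMem hP.1, Finset.erase_insert hP.1]

section Unlift

variable {Q : Finset (Finset (Fin (d+1)))} {B₀ : Finset (Fin (d+1))}

lemma last_not_mem_of_ne (hQ : IsSetPartition Q) (hB₀Q : B₀ ∈ Q)
    (hlast : Fin.last d ∈ B₀) {C : Finset (Fin (d+1))} (hC : C ∈ Q) (hne : C ≠ B₀) :
    Fin.last d ∉ C :=
  fun h => hne (block_eq_of_mem hQ hC hB₀Q h hlast)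

lemma up_down_block (hQ : IsSetPartition Q) (hB₀Q : B₀ ∈ Q)
    (hlast : Fin.last d ∈ B₀) {C : Finset (Fin (d+1))} (hC : C ∈ Q.erase B₀) :
    up (down C) = C :=
  up_down_of_last_not_mem
    (last_not_mem_of_ne hQ hB₀Q hlast (Finset.mem_of_mem_erase hC) (Finset.ne_of_mem_erase hC))

lemma down_B₀_not_mem (hQ : IsSetPartition Q) (hB₀Q : B₀ ∈ Q)
    (hlast : Fin.last d ∈ B₀) :
    down B₀ ∉ (Q.erase B₀).image down := by
  simp only [mem_image]
  rintro ⟨C, hC, hCeq⟩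
  have hCQ := Finset.mem_of_mem_erase hC
  have hCne := Finset.ne_of_mem_erase hC
  have hCe : C ≠ ∅ := block_ne_empty hQ hCQ
  obtain ⟨x, hx⟩ := Finset.nonempty_iff_ne_empty.2 hCe
  have hxlast : x ≠ Fin.last d := by
    rintro rfl; exact last_not_mem_of_ne hQ hB₀Q hlast hCQ hCne hx
  obtain ⟨y, rfl⟩ := Fin.exists_castSucc_eq.2 hxlast
  have hyB₀ : y.castSucc ∈ B₀ := by
    have : y ∈ down B₀ := hCeq ▸ (mem_down.2 hx)
    exact mem_down.1 this
  exact hCne (block_eq_of_mem hQ hCQ hB₀Q hx hyB₀)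

lemma empty_not_mem_image_down (hQ : IsSetPartition Q) (hB₀Q : B₀ ∈ Q)
    (hlast : Fin.last d ∈ B₀) :
    (∅ : Finset (Fin d)) ∉ (Q.erase B₀).image down := by
  simp only [mem_image]
  rintro ⟨C, hC, hCeq⟩
  have hCQ := Finset.mem_of_mem_erase hC
  exact down_ne_empty (block_ne_empty hQ hCQ)
    (last_not_mem_of_ne hQ hB₀Q hlast hCQ (Finset.ne_of_mem_erase hC)) hCeq

lemma image_down_eq (hB₀Q : B₀ ∈ Q) :
    Q.image down = insert (down B₀) ((Q.erase B₀).image down) := by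
  conv_lhs => rw [← Finset.insert_erase hB₀Q]
  rw [Finset.image_insert]

lemma card_image_down (hQ : IsSetPartition Q) (hB₀Q : B₀ ∈ Q)
    (hlast : Fin.last d ∈ B₀) :
    ((Q.erase B₀).image down).card = Q.card - 1 := by
  rw [Finset.card_image_of_injOn, Finset.card_erase_of_mem hB₀Q]
  intro C hC C' hC' h
  have := congrArg up h
  rwa [up_down_block hQ hB₀Q hlast hC, up_down_block hQ hB₀Q hlast hC'] at this

lemma unlift_isSetPartition (hQ : IsSetPartition Q) :
    IsSetPartition ((Q.image down).erase ∅) := by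
  constructor
  · exact Finset.notMem_erase _ _
  · intro y
    obtain ⟨D, ⟨hDQ, hyD⟩, huniq⟩ := hQ.2 y.castSucc
    refine ⟨down D, ⟨?_, mem_down.2 hyD⟩, ?_⟩
    · refine Finset.mem_erase.2 ⟨?_, mem_image_of_mem down hDQ⟩
      intro h
      have : y ∈ down D := mem_down.2 hyD
      simp [h] at this
    · rintro E ⟨hE, hyE⟩
      obtain ⟨C, hCQ, rfl⟩ := mem_image.1 (Finset.mem_of_mem_erase hE)
      have : C = D := huniq C ⟨hCQ, mem_down.1 hyE⟩
      rw [this]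

lemma unlift_eq (hQ : IsSetPartition Q) (hB₀Q : B₀ ∈ Q)
    (hlast : Fin.last d ∈ B₀) :
    (Q.image down).erase ∅ = if down B₀ = ∅ then (Q.erase B₀).image down
      else insert (down B₀) ((Q.erase B₀).image down) := by
  have hSne : (∅ : Finset (Fin d)) ∉ (Q.erase B₀).image down :=
    empty_not_mem_image_down hQ hB₀Q hlast
  rw [image_down_eq hB₀Q]
  split_ifs with h
  · rw [h, Finset.erase_insert hSne]
  · apply Finset.erase_eq_of_notMem
    simp only [Finset.mem_insert]
    rintro (h' | h')
    · exact h h'.symm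
    · exact hSne h'

lemma unlift_card (hQ : IsSetPartition Q) (hB₀Q : B₀ ∈ Q)
    (hlast : Fin.last d ∈ B₀) :
    ((Q.image down).erase ∅).card = if down B₀ = ∅ then Q.card - 1 else Q.card := by
  have hBnm : down B₀ ∉ (Q.erase B₀).image down := down_B₀_not_mem hQ hB₀Q hlast
  have hcQ : 1 ≤ Q.card := Finset.card_pos.2 ⟨B₀, hB₀Q⟩
  rw [unlift_eq hQ hB₀Q hlast]
  split_ifs with h
  · exact card_image_down hQ hB₀Q hlast
  · rw [Finset.card_insert_of_notMem hBnm, card_image_down hQ hB₀Q hlast]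
    omega

lemma down_B₀_mem_unlift (hB₀Q : B₀ ∈ Q) (h : down B₀ ≠ ∅) :
    down B₀ ∈ (Q.image down).erase ∅ :=
  Finset.mem_erase.2 ⟨h, mem_image_of_mem _ hB₀Q⟩

lemma lift_unlift (hQ : IsSetPartition Q) (hB₀Q : B₀ ∈ Q)
    (hlast : Fin.last d ∈ B₀) :
    lift ((Q.image down).erase ∅) (down B₀) = Q := by
  set S := (Q.erase B₀).image down with hS
  have hSne : (∅ : Finset (Fin d)) ∉ S := empty_not_mem_image_down hQ hB₀Q hlast
  have hBnm : down B₀ ∉ S := down_B₀_not_mem hQ hB₀Q hlast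
  have hP : (Q.image down).erase ∅ = if down B₀ = ∅ then S else insert (down B₀) S :=
    unlift_eq hQ hB₀Q hlast
  have hPe : ((Q.image down).erase ∅).erase (down B₀) = S := by
    rw [hP]
    split_ifs with h
    · rw [h, Finset.erase_eq_of_notMem hSne]
    · exact Finset.erase_insert hBnm
  have himg : S.image up = Q.erase B₀ := by
    rw [hS, Finset.image_image]
    apply (Finset.image_congr (g := id) ?_).trans (Finset.image_id)
    intro C hC
    exact up_down_block hQ hB₀Q hlast hC
  rw [lift, hPe, himg, up_down, Finset.insert_erase hlast, Finset.insert_erase hB₀Q]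

end Unlift

noncomputable def theB₀ {d : ℕ} (Q : Finset (Finset (Fin (d+1))))
    (hQ : IsSetPartition Q) : Finset (Fin (d+1)) :=
  Q.choose (fun B => Fin.last d ∈ B) (hQ.2 (Fin.last d))

lemma theB₀_mem {d : ℕ} (Q : Finset (Finset (Fin (d+1)))) (hQ : IsSetPartition Q) :
    theB₀ Q hQ ∈ Q :=
  Finset.choose_mem (fun B => Fin.last d ∈ B) Q (hQ.2 (Fin.last d))

lemma theB₀_last {d : ℕ} (Q : Finset (Finset (Fin (d+1)))) (hQ : IsSetPartition Q) :
    Fin.last d ∈ theB₀ Q hQ :=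
  Finset.choose_property (fun B => Fin.last d ∈ B) Q (hQ.2 (Fin.last d))

lemma theB₀_lift {d : ℕ} {P : Finset (Finset (Fin d))} {B : Finset (Fin d)}
    (hP : IsSetPartition P) (hB : B ∈ P ∨ B = ∅) (h : IsSetPartition (lift P B)) :
    theB₀ (lift P B) h = insert (Fin.last d) (up B) := by
  obtain ⟨D, hD, huniq⟩ := h.2 (Fin.last d)
  rw [huniq _ ⟨theB₀_mem _ h, theB₀_last _ h⟩,
    huniq _ ⟨Finset.mem_insert_self _ _, Finset.mem_insert_self _ _⟩]

end SPaux

instance {d : ℕ} : DecidablePred (@IsSetPartition d) := fun _ =>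
  decidable_of_iff (∅ ∉ _ ∧ ∀ i : Fin d, ∃ B, (B ∈ _ ∧ i ∈ B) ∧ ∀ C, (C ∈ _ ∧ i ∈ C) → C = B)
    Iff.rfl

/-- number of set partitions of `Fin d` with exactly `k` blocks -/
def partCount (k d : ℕ) : ℕ :=
  (Finset.univ.filter
    (fun P : Finset (Finset (Fin d)) => IsSetPartition P ∧ P.card = k)).card

open SPaux in
theorem partCount_succ_succ (k d : ℕ) :
    partCount (k+1) (d+1) = (k+1) * partCount (k+1) d + partCount k d := by
  classical
  set s : Finset (Finset (Finset (Fin (d+1)))) :=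
    Finset.univ.filter (fun Q => IsSetPartition Q ∧ Q.card = k+1) with hs
  set A1 : Finset ((Finset (Finset (Fin d))) × Finset (Fin d)) :=
    (Finset.univ.filter
      (fun P : Finset (Finset (Fin d)) => IsSetPartition P ∧ P.card = k+1)).biUnion
      (fun P => {P} ×ˢ P) with hA1
  set A2 : Finset ((Finset (Finset (Fin d))) × Finset (Fin d)) :=
    (Finset.univ.filter
      (fun P : Finset (Finset (Fin d)) => IsSetPartition P ∧ P.card = k)).image
      (fun P => (P, ∅)) with hA2
  have memA1 : ∀ z : (Finset (Finset (Fin d))) × Finset (Fin d),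
      z ∈ A1 ↔ (IsSetPartition z.1 ∧ z.1.card = k+1) ∧ z.2 ∈ z.1 := by
    rintro ⟨P, B⟩
    simp only [hA1, Finset.mem_biUnion, Finset.mem_filter, Finset.mem_univ, true_and,
      Finset.mem_product, Finset.mem_singleton]
    constructor
    · rintro ⟨P', ⟨h1, h2⟩, rfl, h4⟩
      exact ⟨⟨h1, h2⟩, h4⟩
    · rintro ⟨⟨h1, h2⟩, h3⟩
      exact ⟨P, ⟨h1, h2⟩, rfl, h3⟩
  have memA2 : ∀ z : (Finset (Finset (Fin d))) × Finset (Fin d),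
      z ∈ A2 ↔ (IsSetPartition z.1 ∧ z.1.card = k) ∧ z.2 = ∅ := by
    rintro ⟨P, B⟩
    simp only [hA2, Finset.mem_image, Finset.mem_filter, Finset.mem_univ, true_and,
      Prod.mk.injEq]
    constructor
    · rintro ⟨P', ⟨h1, h2⟩, rfl, rfl⟩
      exact ⟨⟨h1, h2⟩, rfl⟩
    · rintro ⟨⟨h1, h2⟩, rfl⟩
      exact ⟨P, ⟨h1, h2⟩, rfl, rfl⟩
  have hdisj : Disjoint A1 A2 := by
    rw [Finset.disjoint_left]
    intro z h1 h2
    obtain ⟨⟨hp, _⟩, hz1⟩ := (memA1 z).1 h1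
    obtain ⟨_, hz2⟩ := (memA2 z).1 h2
    rw [hz2] at hz1
    exact hp.1 hz1
  have hcardA1 : A1.card = (k+1) * partCount (k+1) d := by
    rw [hA1, Finset.card_biUnion]
    · rw [Finset.sum_congr rfl (g := fun _ => k+1)
        (fun P hP => by
          rw [Finset.card_product, Finset.card_singleton, one_mul,
            (Finset.mem_filter.1 hP).2.2]),
        Finset.sum_const, partCount, smul_eq_mul, mul_comm]
    · intro P hP P' hP' hne
      rw [Function.onFun, Finset.disjoint_left]
      rintro ⟨a, b⟩ h1 h2
      rw [Finset.mem_product, Finset.mem_singleton] at h1 h2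
      exact hne (h1.1 ▸ h2.1)
  have hcardA2 : A2.card = partCount k d := by
    rw [hA2, Finset.card_image_of_injective _ (fun a b hab => (Prod.mk.injEq _ _ _ _ ▸ hab).1),
      partCount]
  have hmain : s.card = (A1 ∪ A2).card := by
    refine Finset.card_bij'
      (fun Q hQ => ((Q.image down).erase ∅,
        down (theB₀ Q (Finset.mem_filter.1 hQ).2.1)))
      (fun z _ => lift z.1 z.2) ?hi ?hj ?li ?ri
    case hi =>
      intro Q hQ
      obtain ⟨-, hQp, hQc⟩ := Finset.mem_filter.1 hQ
      have hB₀Q := theB₀_mem Q hQp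
      have hlast := theB₀_last Q hQp
      rw [Finset.mem_union]
      by_cases h : down (theB₀ Q hQp) = ∅
      · right
        rw [memA2]
        refine ⟨⟨unlift_isSetPartition hQp, ?_⟩, h⟩
        rw [unlift_card hQp hB₀Q hlast, if_pos h, hQc]
        omega
      · left
        rw [memA1]
        refine ⟨⟨unlift_isSetPartition hQp, ?_⟩, down_B₀_mem_unlift hB₀Q h⟩
        rw [unlift_card hQp hB₀Q hlast, if_neg h, hQc]
    case hj =>
      rintro ⟨P, B⟩ hz
      rw [Finset.mem_union, memA1, memA2] at hz
      have hP : IsSetPartition P := by rcases hz with h | h <;> exact h.1.1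
      have hB : B ∈ P ∨ B = ∅ := by
        rcases hz with h | h
        · exact Or.inl h.2
        · exact Or.inr h.2
      rw [hs, Finset.mem_filter]
      refine ⟨Finset.mem_univ _, lift_isSetPartition hP hB, ?_⟩
      rw [lift_card hP hB]
      rcases hz with h | h
      · rw [if_neg, h.1.2]
        intro he
        rw [he] at h
        exact hP.1 h.2
      · rw [if_pos h.2, h.1.2]
    case li =>
      intro Q hQ
      obtain ⟨-, hQp, -⟩ := Finset.mem_filter.1 hQ
      exact lift_unlift hQp (theB₀_mem Q hQp) (theB₀_last Q hQp)
    case ri =>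
      rintro ⟨P, B⟩ hz
      rw [Finset.mem_union, memA1, memA2] at hz
      have hP : IsSetPartition P := by rcases hz with h | h <;> exact h.1.1
      have hB : B ∈ P ∨ B = ∅ := by
        rcases hz with h | h
        · exact Or.inl h.2
        · exact Or.inr h.2
      have hlp := lift_isSetPartition hP hB
      have hth : theB₀ (lift P B) hlp = insert (Fin.last d) (up B) :=
        theB₀_lift hP hB hlp
      have : down (theB₀ (lift P B) hlp) = B := by
        rw [hth, down_insert_last, down_up]
      ext : 1
      · exact image_down_lift hP hB
      · exact this
  have hsl : partCount (k+1) (d+1) = s.card := by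
    rw [partCount, hs]
  rw [hsl, hmain, Finset.card_union_of_disjoint hdisj, hcardA1, hcardA2]

lemma isSetPartition_empty_zero : IsSetPartition (∅ : Finset (Finset (Fin 0))) :=
  ⟨Finset.notMem_empty _, fun i => i.elim0⟩

lemma eq_empty_of_isSetPartition_zero {P : Finset (Finset (Fin 0))}
    (hP : IsSetPartition P) : P = ∅ := by
  rw [Finset.eq_empty_iff_forall_notMem]
  intro B hB
  have hBe : B = ∅ := Finset.eq_empty_of_forall_notMem (fun i => i.elim0)
  exact hP.1 (hBe ▸ hB)

theorem partCount_zero_zero : partCount 0 0 = 1 := by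
  rw [partCount]
  have : (Finset.univ.filter
      (fun P : Finset (Finset (Fin 0)) => IsSetPartition P ∧ P.card = 0)) = {∅} := by
    ext P
    simp only [Finset.mem_filter, Finset.mem_univ, true_and, Finset.mem_singleton,
      Finset.card_eq_zero]
    constructor
    · rintro ⟨-, h⟩; exact h
    · rintro rfl
      exact ⟨isSetPartition_empty_zero, rfl⟩
  rw [this, Finset.card_singleton]

theorem partCount_succ_zero (k : ℕ) : partCount (k+1) 0 = 0 := by
  rw [partCount, Finset.card_eq_zero, Finset.filter_eq_empty_iff]
  rintro P - ⟨hP, hc⟩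
  rw [eq_empty_of_isSetPartition_zero hP] at hc
  simp at hc

theorem partCount_zero_succ (d : ℕ) : partCount 0 (d+1) = 0 := by
  rw [partCount, Finset.card_eq_zero, Finset.filter_eq_empty_iff]
  rintro P - ⟨hP, hc⟩
  obtain ⟨B, ⟨hBP, -⟩, -⟩ := hP.2 0
  rw [Finset.card_eq_zero] at hc
  rw [hc] at hBP
  exact Finset.notMem_empty _ hBP

theorem bellRestricted_eq_sum (n d : ℕ) :
    bellRestricted n d = ∑ k ∈ Finset.range (n+1), partCount k d := by
  classical
  rw [bellRestricted, Nat.card_eq_fintype_card, Fintype.card_subtype]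
  rw [Finset.card_eq_sum_card_fiberwise
    (f := fun P : Finset (Finset (Fin d)) => P.card) (t := Finset.range (n+1))
    (fun P hP => Finset.mem_range.2 (by
      simp only []
      have := (Finset.mem_filter.1 hP).2.2
      omega))]
  apply Finset.sum_congr rfl
  intro k hk
  rw [Finset.mem_range] at hk
  rw [partCount]
  congr 1
  rw [Finset.filter_filter]
  ext P
  simp only [Finset.mem_filter, Finset.mem_univ, true_and]
  constructor
  · rintro ⟨⟨h1, -⟩, h3⟩
    exact ⟨h1, h3⟩
  · rintro ⟨h1, rfl⟩
    exact ⟨⟨h1, by omega⟩, rfl⟩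

namespace PSaux

open PowerSeries

/-- nonnegativity of all coefficients -/
def NN (f : PowerSeries ℤ) : Prop := ∀ d, 0 ≤ PowerSeries.coeff (R := ℤ) d f

lemma NN_add {f g : PowerSeries ℤ} (hf : NN f) (hg : NN g) : NN (f + g) := by
  intro d; rw [map_add]; exact add_nonneg (hf d) (hg d)

lemma NN_mul {f g : PowerSeries ℤ} (hf : NN f) (hg : NN g) : NN (f * g) := by
  intro d
  rw [PowerSeries.coeff_mul]
  exact Finset.sum_nonneg fun p _ => mul_nonneg (hf p.1) (hg p.2)

lemma NN_one : NN 1 := by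
  intro d
  rw [PowerSeries.coeff_one]
  split_ifs <;> norm_num

lemma NN_X : NN (X : PowerSeries ℤ) := by
  intro d
  rw [PowerSeries.coeff_X]
  split_ifs <;> norm_num

lemma NN_sum {s : Finset ℕ} {f : ℕ → PowerSeries ℤ} (h : ∀ k ∈ s, NN (f k)) :
    NN (∑ k ∈ s, f k) := by
  intro d
  rw [map_sum]
  exact Finset.sum_nonneg fun k hk => h k hk d

lemma coeff_X_pow_mul_ite (f : PowerSeries ℤ) (m d : ℕ) :
    PowerSeries.coeff (R := ℤ) d (X ^ m * f) =
      if m ≤ d then PowerSeries.coeff (R := ℤ) (d - m) f else 0 := by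
  rcases le_or_gt m d with h | h
  · rw [if_pos h]
    conv_lhs => rw [show d = (d - m) + m by omega]
    exact PowerSeries.coeff_X_pow_mul f m (d - m)
  · rw [if_neg (not_le.2 h), PowerSeries.coeff_mul]
    apply Finset.sum_eq_zero
    rintro ⟨i, j⟩ hij
    rw [Finset.HasAntidiagonal.mem_antidiagonal] at hij
    rw [PowerSeries.coeff_X_pow, if_neg (by omega), zero_mul]

lemma coeff_one_sub_X_pow_mul (f : PowerSeries ℤ) (m d : ℕ) :
    PowerSeries.coeff (R := ℤ) d ((1 - X ^ m) * f) =
      PowerSeries.coeff (R := ℤ) d f -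
        (if m ≤ d then PowerSeries.coeff (R := ℤ) (d - m) f else 0) := by
  rw [sub_mul, one_mul, map_sub, coeff_X_pow_mul_ite]

/-- `1/(1-jX)` -/
def inv (j : ℕ) : PowerSeries ℤ := PowerSeries.mk fun d => (j : ℤ) ^ d

@[simp] lemma coeff_inv (j d : ℕ) : PowerSeries.coeff (R := ℤ) d (inv j) = (j : ℤ) ^ d :=
  PowerSeries.coeff_mk _ _

lemma inv_cancel (j : ℕ) :
    (1 - PowerSeries.C (R := ℤ) (j : ℤ) * X) * inv j = 1 := by
  ext d
  rw [sub_mul, one_mul, map_sub, mul_assoc, PowerSeries.coeff_C_mul,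
    coeff_inv, PowerSeries.coeff_one]
  rw [show (X : PowerSeries ℤ) = X ^ 1 from (pow_one _).symm, coeff_X_pow_mul_ite]
  rcases Nat.eq_zero_or_pos d with rfl | hd
  · simp
  · rw [if_pos (by omega : 1 ≤ d), coeff_inv, if_neg (by omega : ¬ d = 0)]
    have h1 : (j : ℤ) * (j : ℤ) ^ (d - 1) = (j : ℤ) ^ d := by
      conv_rhs => rw [show d = 1 + (d - 1) by omega]
      rw [pow_add, pow_one]
    rw [h1, sub_self]

lemma NN_one_sub_X_pow_mul_inv {j : ℕ} (hj : 1 ≤ j) (m : ℕ) :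
    NN ((1 - X ^ m) * inv j) := by
  intro d
  rw [coeff_one_sub_X_pow_mul, coeff_inv]
  split_ifs with h
  · rw [coeff_inv]
    have : (j : ℤ) ^ (d - m) ≤ (j : ℤ) ^ d :=
      pow_le_pow_right₀ (by exact_mod_cast hj) (by omega)
    linarith
  · rw [sub_zero]
    positivity

/-- `(1-X^j)/(1-jX) - 1` -/
noncomputable def ghat (j : ℕ) : PowerSeries ℤ := (1 - X ^ j) * inv j - 1

lemma NN_ghat {j : ℕ} (hj : 1 ≤ j) : NN (ghat j) := by
  intro d
  rw [ghat, map_sub, coeff_one_sub_X_pow_mul, coeff_inv, PowerSeries.coeff_one]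
  simp only [coeff_inv]
  rcases Nat.eq_zero_or_pos d with rfl | hd
  · rw [if_neg (by omega : ¬ j ≤ 0), if_pos rfl]
    simp
  · rw [if_neg (by omega : ¬ d = 0)]
    split_ifs with h
    · have : (j : ℤ) ^ (d - j) ≤ (j : ℤ) ^ d :=
        pow_le_pow_right₀ (by exact_mod_cast hj) (by omega)
      linarith
    · rw [sub_zero, sub_zero]
      positivity

lemma ghat_one : ghat 1 = 0 := by
  have h := inv_cancel 1
  rw [Nat.cast_one, map_one, one_mul] at h
  rw [ghat, pow_one, h, sub_self]

/-- shift of `ghat`: `ghat k = X * hser k` -/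
noncomputable def hser (k : ℕ) : PowerSeries ℤ :=
  PowerSeries.mk fun d => (k:ℤ)^(d+1) - (if k ≤ d+1 then (k:ℤ)^(d+1-k) else 0)

@[simp] lemma coeff_hser (k d : ℕ) :
    PowerSeries.coeff (R := ℤ) d (hser k) =
      (k:ℤ)^(d+1) - (if k ≤ d+1 then (k:ℤ)^(d+1-k) else 0) :=
  PowerSeries.coeff_mk _ _

lemma ghat_eq_X_mul_hser {k : ℕ} (hk : 1 ≤ k) : ghat k = X * hser k := by
  ext d
  rw [ghat, map_sub, coeff_one_sub_X_pow_mul, coeff_inv, PowerSeries.coeff_one,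
    show (X : PowerSeries ℤ) = X ^ 1 from (pow_one _).symm, coeff_X_pow_mul_ite]
  rcases Nat.eq_zero_or_pos d with rfl | hd
  · rw [if_neg (by omega : ¬ k ≤ 0), if_pos rfl, if_neg (by omega : ¬ 1 ≤ 0)]
    simp
  · rw [if_pos (show 1 ≤ d by omega), coeff_hser, show d - 1 + 1 = d from by omega]
    simp only [coeff_inv]
    have hne : ¬ d = 0 := by omega
    simp [hne]

lemma hser_nonneg {k : ℕ} (hk : 1 ≤ k) (d : ℕ) :
    0 ≤ PowerSeries.coeff (R := ℤ) d (hser k) := by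
  rw [coeff_hser]
  split_ifs with h
  · have : (k : ℤ) ^ (d + 1 - k) ≤ (k : ℤ) ^ (d + 1) :=
      pow_le_pow_right₀ (by exact_mod_cast hk) (by omega)
    linarith
  · rw [sub_zero]; positivity

lemma key_ineq {k : ℕ} (hk : 2 ≤ k) : 3 * (k:ℤ) + 2 ≤ 2 * (k:ℤ)^k := by
  have h1 : (k:ℤ)^2 ≤ (k:ℤ)^k := pow_le_pow_right₀ (by exact_mod_cast hk.trans' one_le_two) hk
  have hK : (2:ℤ) ≤ (k:ℤ) := by exact_mod_cast hk
  nlinarith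

lemma sandwich_aux {k : ℕ} (hk : 2 ≤ k) (t : ℕ) :
    ∃ c : ℤ, 3 * (k:ℤ)^(k+3) ≤ 2 * c ∧
      (∀ d, PowerSeries.coeff (R := ℤ) d
        ((∏ m ∈ Finset.Icc k (k - 1 + t), (1 - X^m)) * hser k) ≤ (k:ℤ)^(d+1)) ∧
      (∀ d, c * (k:ℤ)^d ≤ (k:ℤ)^(2*k+1+t) * PowerSeries.coeff (R := ℤ) d
        ((∏ m ∈ Finset.Icc k (k - 1 + t), (1 - X^m)) * hser k)) := by
  have hK : (2:ℤ) ≤ (k:ℤ) := by exact_mod_cast hk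
  have hK0 : (0:ℤ) < (k:ℤ) := by linarith
  induction t with
  | zero =>
    rw [Finset.Icc_eq_empty (by omega : ¬ k ≤ k - 1 + 0), Finset.prod_empty, one_mul]
    refine ⟨(k:ℤ)^(2*k+2) - (k:ℤ)^(k+2), ?_, ?_, ?_⟩
    · have h1 : (k:ℤ)^(2*k+2) = (k:ℤ)^k * (k:ℤ)^(k+2) := by
        rw [← pow_add]; congr 1; omega
      have h2 : (k:ℤ)^(k+3) = (k:ℤ) * (k:ℤ)^(k+2) := by
        rw [← pow_succ']
      have h3 := key_ineq hk
      have h4 : (0:ℤ) ≤ (k:ℤ)^(k+2) := by positivity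
      rw [h1, h2]
      nlinarith
    · intro d
      rw [coeff_hser]
      have h0 : (0:ℤ) ≤ (if k ≤ d+1 then (k:ℤ)^(d+1-k) else 0) := by
        split_ifs
        · positivity
        · exact le_refl 0
      linarith
    · intro d
      rw [coeff_hser, mul_sub]
      have e1 : (k:ℤ)^(2*k+1+0) * (k:ℤ)^(d+1) = (k:ℤ)^(2*k+2) * (k:ℤ)^d := by
        rw [← pow_add, ← pow_add]; congr 1; omega
      have e2 : (k:ℤ)^(2*k+1+0) * (if k ≤ d+1 then (k:ℤ)^(d+1-k) else 0)
          ≤ (k:ℤ)^(k+2) * (k:ℤ)^d := by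
        split_ifs with h
        · rw [← pow_add, ← pow_add]
          apply pow_le_pow_right₀ (by linarith)
          omega
        · rw [mul_zero]; positivity
      rw [e1]
      have : (0:ℤ) ≤ (k:ℤ)^d := by positivity
      nlinarith [e2]
  | succ t ih =>
    obtain ⟨c, hc, hup, hlo⟩ := ih
    have hcpos : 0 < c := by
      have : (0:ℤ) < (k:ℤ)^(k+3) := by positivity
      linarith
    set F := (∏ m ∈ Finset.Icc k (k - 1 + t), (1 - X^m)) * hser k with hF
    have hFnn : ∀ d, 0 ≤ PowerSeries.coeff (R := ℤ) d F := by
      intro d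
      have h1 := hlo d
      have h2 : (0:ℤ) < (k:ℤ)^(2*k+1+t) := by positivity
      have h3 : (0:ℤ) ≤ c * (k:ℤ)^d := by positivity
      nlinarith
    have hprod : (∏ m ∈ Finset.Icc k (k - 1 + (t+1)), (1 - X^m)) * hser k
        = (1 - X^(k+t)) * F := by
      rw [show k - 1 + (t+1) = (k - 1 + t) + 1 by omega,
        Finset.prod_Icc_succ_top (by omega : k ≤ (k - 1 + t) + 1),
        show (k - 1 + t) + 1 = k + t by omega, hF]
      ring
    refine ⟨(k:ℤ) * c - (k:ℤ)^(k+3), ?_, ?_, ?_⟩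
    · have h2 : (k:ℤ)^(k+3) * (k:ℤ) ≥ 2 * (k:ℤ)^(k+3) := by nlinarith [pow_pos hK0 (k+3)]
      nlinarith [pow_pos hK0 (k+3)]
    · intro d
      rw [hprod, coeff_one_sub_X_pow_mul]
      have h1 := hup d
      have h2 : (0:ℤ) ≤ (if k + t ≤ d then PowerSeries.coeff (R := ℤ) (d - (k+t)) F else 0) := by
        split_ifs
        · exact hFnn _
        · exact le_refl 0
      linarith
    · intro d
      rw [hprod, coeff_one_sub_X_pow_mul, mul_sub]
      have e1 : (k:ℤ)^(2*k+1+(t+1)) * PowerSeries.coeff (R := ℤ) d F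
          = (k:ℤ) * ((k:ℤ)^(2*k+1+t) * PowerSeries.coeff (R := ℤ) d F) := by
        rw [show 2*k+1+(t+1) = (2*k+1+t)+1 by omega, pow_succ', mul_assoc]
      have e2 : (k:ℤ)^(2*k+1+(t+1)) *
          (if k + t ≤ d then PowerSeries.coeff (R := ℤ) (d - (k+t)) F else 0)
          ≤ (k:ℤ)^(k+3) * (k:ℤ)^d := by
        split_ifs with h
        · calc (k:ℤ)^(2*k+1+(t+1)) * PowerSeries.coeff (R := ℤ) (d - (k+t)) F
              ≤ (k:ℤ)^(2*k+1+(t+1)) * (k:ℤ)^(d - (k+t) + 1) := by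
                apply mul_le_mul_of_nonneg_left (hup _) (by positivity)
            _ = (k:ℤ)^(k+3) * (k:ℤ)^d := by
                rw [← pow_add, ← pow_add]; congr 1; omega
        · rw [mul_zero]; positivity
      have h3 := hlo d
      have h4 : (k:ℤ) * (c * (k:ℤ)^d) ≤ (k:ℤ) * ((k:ℤ)^(2*k+1+t) * PowerSeries.coeff (R := ℤ) d F) :=
        mul_le_mul_of_nonneg_left h3 (by linarith)
      rw [e1]
      nlinarith [e2]

lemma NN_zero : NN 0 := by intro d; simp

lemma NN_X_pow (m : ℕ) : NN ((X : PowerSeries ℤ) ^ m) := by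
  intro d
  rw [PowerSeries.coeff_X_pow]
  split_ifs <;> norm_num

lemma NN_sandwich {k : ℕ} (hk : 1 ≤ k) (n : ℕ) :
    NN ((∏ m ∈ Finset.Icc k n, (1 - X^m)) * ghat k) := by
  rcases eq_or_lt_of_le hk with h1 | hk2
  · rw [← h1, ghat_one, mul_zero]
    exact NN_zero
  · have hk2' : 2 ≤ k := hk2
    have hKpos : (0:ℤ) < (k:ℤ) := by exact_mod_cast lt_of_lt_of_le Nat.zero_lt_one hk
    rcases lt_or_ge n (k-1) with h | h
    · rw [Finset.Icc_eq_empty (by omega), Finset.prod_empty, one_mul]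
      exact NN_ghat hk
    · obtain ⟨t, rfl⟩ : ∃ t, n = k - 1 + t := ⟨n - (k-1), by omega⟩
      obtain ⟨c, hc, -, hlo⟩ := sandwich_aux hk2' t
      have hcpos : 0 < c := by nlinarith [pow_pos hKpos (k+3)]
      have hFnn : NN ((∏ m ∈ Finset.Icc k (k-1+t), (1 - X^m)) * hser k) := by
        intro d
        by_contra hneg
        push_neg at hneg
        have h1 := hlo d
        have h2 : (0:ℤ) < (k:ℤ)^(2*k+1+t) := pow_pos hKpos _
        have h3 : (0:ℤ) < c * (k:ℤ)^d := mul_pos hcpos (pow_pos hKpos d)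
        have h4 := mul_neg_of_pos_of_neg h2 hneg
        linarith
      have heq : (∏ m ∈ Finset.Icc k (k-1+t), (1 - X^m)) * (X * hser k)
          = X * ((∏ m ∈ Finset.Icc k (k-1+t), (1 - X^m)) * hser k) := by ring
      rw [ghat_eq_X_mul_hser hk, heq]
      exact NN_mul NN_X hFnn

noncomputable def Dser (n : ℕ) : PowerSeries ℤ :=
  ∏ j ∈ Finset.Icc 1 n, ((1 - X^j) * inv j)

noncomputable def TS (k : ℕ) : PowerSeries ℤ :=
  PowerSeries.mk fun d => (partCount k d : ℤ)

noncomputable def BS (n : ℕ) : PowerSeries ℤ :=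
  PowerSeries.mk fun d => (bellRestricted n d : ℤ)

noncomputable def Aser (n : ℕ) : PowerSeries ℤ :=
  BS n * ∏ i ∈ Finset.Icc 1 n, (1 - X^i)

lemma TS_zero : TS 0 = 1 := by
  ext d
  rw [TS, PowerSeries.coeff_mk, PowerSeries.coeff_one]
  cases d with
  | zero => rw [if_pos rfl, partCount_zero_zero]; norm_num
  | succ e => rw [if_neg (by omega), partCount_zero_succ]; norm_num

lemma TS_succ_mul (k : ℕ) :
    (1 - PowerSeries.C (R := ℤ) ((k+1 : ℕ) : ℤ) * X) * TS (k+1) = X * TS k := by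
  ext d
  rw [sub_mul, one_mul, map_sub, mul_assoc, PowerSeries.coeff_C_mul,
    show (X : PowerSeries ℤ) = X ^ 1 from (pow_one _).symm, coeff_X_pow_mul_ite,
    coeff_X_pow_mul_ite]
  cases d with
  | zero =>
    rw [if_neg (by omega), if_neg (by omega), mul_zero, sub_zero,
      TS, PowerSeries.coeff_mk, partCount_succ_zero]
    norm_num
  | succ e =>
    rw [if_pos (by omega), if_pos (by omega)]
    simp only [TS, PowerSeries.coeff_mk, Nat.add_sub_cancel]
    have hrec := partCount_succ_succ k e
    have : ((partCount (k+1) (e+1) : ℤ)) = ((k+1 : ℕ) : ℤ) * (partCount (k+1) e : ℤ)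
        + (partCount k e : ℤ) := by exact_mod_cast hrec
    linarith

lemma TS_eq (k : ℕ) : TS k = X ^ k * ∏ j ∈ Finset.Icc 1 k, inv j := by
  induction k with
  | zero =>
    rw [TS_zero, Finset.Icc_eq_empty (by omega), Finset.prod_empty, pow_zero, one_mul]
  | succ k ih =>
    have hcancel := inv_cancel (k+1)
    calc TS (k+1)
        = (1 - PowerSeries.C (R := ℤ) ((k+1 : ℕ) : ℤ) * X) * inv (k+1) * TS (k+1) := by
          rw [hcancel, one_mul]
      _ = ((1 - PowerSeries.C (R := ℤ) ((k+1 : ℕ) : ℤ) * X) * TS (k+1)) * inv (k+1) := by ring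
      _ = (X * TS k) * inv (k+1) := by rw [TS_succ_mul]
      _ = X ^ (k+1) * ∏ j ∈ Finset.Icc 1 (k+1), inv j := by
          rw [ih, Finset.prod_Icc_succ_top (by omega : 1 ≤ k+1)]
          ring

lemma BS_eq (n : ℕ) : BS n = ∑ k ∈ Finset.range (n+1), TS k := by
  ext d
  rw [BS, PowerSeries.coeff_mk, map_sum, bellRestricted_eq_sum]
  simp only [TS, PowerSeries.coeff_mk]
  push_cast
  rfl

lemma TS_mul_prod (k : ℕ) :
    TS k * (∏ i ∈ Finset.Icc 1 k, (1 - X^i)) = X^k * Dser k := by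
  rw [TS_eq, Dser, Finset.prod_mul_distrib]
  ring

lemma Aser_succ (n : ℕ) :
    Aser (n+1) = Aser n * (1 - X^(n+1)) + X^(n+1) * Dser (n+1) := by
  have hBS : BS (n+1) = BS n + TS (n+1) := by
    rw [BS_eq, BS_eq, Finset.sum_range_succ]
  have h2 := TS_mul_prod (n+1)
  calc Aser (n+1) = (BS n + TS (n+1)) * ∏ i ∈ Finset.Icc 1 (n+1), (1 - X^i) := by
        rw [Aser, hBS]
    _ = Aser n * (1 - X^(n+1)) + TS (n+1) * ∏ i ∈ Finset.Icc 1 (n+1), (1 - X^i) := by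
        rw [Aser, Finset.prod_Icc_succ_top (by omega : 1 ≤ n+1)]
        ring
    _ = Aser n * (1 - X^(n+1)) + X^(n+1) * Dser (n+1) := by rw [h2]

lemma Dser_succ (n : ℕ) : Dser (n+1) = Dser n * ((1 - X^(n+1)) * inv (n+1)) := by
  rw [Dser, Dser, Finset.prod_Icc_succ_top (by omega : 1 ≤ n+1)]

lemma ghat_spec (j : ℕ) : (1 - X^j) * inv j = 1 + ghat j := by
  rw [ghat]; ring

lemma Aser_zero : Aser 0 = 1 := by
  rw [Aser, Finset.Icc_eq_empty (by omega), Finset.prod_empty, mul_one, BS_eq]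
  rw [Finset.sum_range_one, TS_zero]

lemma W_formula (n : ℕ) :
    Dser n - Aser n = ∑ k ∈ Finset.Icc 1 n,
      (∏ m ∈ Finset.Icc k n, (1 - X^m)) * (Dser (k-1) * ghat k) := by
  induction n with
  | zero =>
    rw [Finset.Icc_eq_empty (by omega), Finset.sum_empty, Aser_zero, Dser,
      Finset.Icc_eq_empty (by omega), Finset.prod_empty, sub_self]
  | succ n ih =>
    rw [Finset.sum_Icc_succ_top (by omega : 1 ≤ n+1)]
    rw [Finset.sum_congr rfl (fun k hk => by
      rw [Finset.prod_Icc_succ_top (by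
        have := (Finset.mem_Icc.1 hk).2; omega : k ≤ n+1)]
      ring : ∀ k ∈ Finset.Icc 1 n,
        (∏ m ∈ Finset.Icc k (n+1), (1 - X^m)) * (Dser (k-1) * ghat k)
          = (1 - X^(n+1)) * ((∏ m ∈ Finset.Icc k n, (1 - X^m)) * (Dser (k-1) * ghat k)))]
    rw [← Finset.mul_sum, ← ih, Finset.Icc_self, Finset.prod_singleton,
      Aser_succ, Dser_succ, ghat_spec, show n+1-1 = n by omega]
    ring

lemma NN_Dser (n : ℕ) : NN (Dser n) := by
  induction n with
  | zero =>
    rw [Dser, Finset.Icc_eq_empty (by omega), Finset.prod_empty]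
    exact NN_one
  | succ n ih =>
    rw [Dser_succ]
    exact NN_mul ih (NN_one_sub_X_pow_mul_inv (by omega) _)

lemma NN_W (n : ℕ) : NN (Dser n - Aser n) := by
  rw [W_formula]
  apply NN_sum
  intro k hk
  have hk1 : 1 ≤ k := (Finset.mem_Icc.1 hk).1
  have : (∏ m ∈ Finset.Icc k n, (1 - X^m)) * (Dser (k-1) * ghat k)
      = Dser (k-1) * ((∏ m ∈ Finset.Icc k n, (1 - X^m)) * ghat k) := by ring
  rw [this]
  exact NN_mul (NN_Dser _) (NN_sandwich hk1 n)

lemma NN_Aser (n : ℕ) : NN (Aser n) := by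
  induction n with
  | zero =>
    intro d
    rw [Aser, Finset.Icc_eq_empty (by omega), Finset.prod_empty, mul_one,
      BS, PowerSeries.coeff_mk]
    exact_mod_cast Int.natCast_nonneg _
  | succ n ih =>
    have heq : Aser (n+1) = Aser n
        + X^(n+1) * (Dser n * ghat (n+1) + (Dser n - Aser n)) := by
      rw [Aser_succ, Dser_succ, ghat_spec]
      ring
    rw [heq]
    exact NN_add ih (NN_mul (NN_X_pow _)
      (NN_add (NN_mul (NN_Dser n) (NN_ghat (by omega))) (NN_W n)))

end PSaux

/-- All coefficients of `(Σ_{d ≥ 0} B_d^{(n)}·X^d) · ∏_{i=1}^{n} (1 − X^i)` in `ℤ⟦X⟧`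
are nonnegative. -/
theorem stmt3 (n : ℕ) :
    ∀ d : ℕ, 0 ≤ PowerSeries.coeff (R := ℤ) d
      ((PowerSeries.mk fun e => (bellRestricted n e : ℤ)) *
        ∏ i ∈ Finset.Icc 1 n, (1 - PowerSeries.X ^ i)) := by
  exact fun d => PSaux.NN_Aser n d
end

section
/- Let K = ℚ and let ab : FreeAlgebra K (Fin n) → MvPolynomial (Fin n) K be the algebra homomorphism determined by ab(ι(i)) = X_i (abelianization). Let N be the subalgebra of invariants of the Perm(Fin n)-action on FreeAlgebra K (Fin n) given by algebra automorphisms with σ · ι(i) = ι(σ i). Then the image of N under ab equals the subalgebra of symmetric polynomials MvPolynomial.symmetricSubalgebra (Fin n) K. -/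
/-- The action of a permutation `σ` of the variables on the free algebra, as the algebra
endomorphism determined by `σ · ι(i) = ι(σ i)`. -/
noncomputable def permAut (n : ℕ) (σ : Equiv.Perm (Fin n)) :
    FreeAlgebra ℚ (Fin n) →ₐ[ℚ] FreeAlgebra ℚ (Fin n) :=
  FreeAlgebra.lift ℚ fun i => FreeAlgebra.ι ℚ (σ i)

/-- `N`, the subalgebra of `Perm (Fin n)`-invariant elements of the free algebra. -/
noncomputable def Ninv (n : ℕ) : Subalgebra ℚ (FreeAlgebra ℚ (Fin n)) where
  carrier := {x | ∀ σ : Equiv.Perm (Fin n), permAut n σ x = x}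
  mul_mem' := by
    intro x y hx hy σ
    rw [map_mul, hx σ, hy σ]
  one_mem' := by intro σ; rw [map_one]
  add_mem' := by
    intro x y hx hy σ
    rw [map_add, hx σ, hy σ]
  zero_mem' := by intro σ; rw [map_zero]
  algebraMap_mem' := by
    intro r σ
    rw [AlgHom.commutes]

/-- The abelianization map `ab : FreeAlgebra ℚ (Fin n) → MvPolynomial (Fin n) ℚ`,
the algebra homomorphism determined by `ab(ι(i)) = X_i`. -/
noncomputable def ab (n : ℕ) : FreeAlgebra ℚ (Fin n) →ₐ[ℚ] MvPolynomial (Fin n) ℚ :=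
  FreeAlgebra.lift ℚ fun i => MvPolynomial.X i

lemma ab_permAut (n : ℕ) (σ : Equiv.Perm (Fin n)) (x : FreeAlgebra ℚ (Fin n)) :
    ab n (permAut n σ x) = MvPolynomial.rename σ (ab n x) := by
  have : (ab n).comp (permAut n σ)
      = (MvPolynomial.rename (R := ℚ) σ).comp (ab n) := by
    apply FreeAlgebra.hom_ext
    ext i
    simp [ab, permAut]
  exact DFunLike.congr_fun this x

lemma permAut_comp (n : ℕ) (τ σ : Equiv.Perm (Fin n)) (x : FreeAlgebra ℚ (Fin n)) :
    permAut n τ (permAut n σ x) = permAut n (τ * σ) x := by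
  have : (permAut n τ).comp (permAut n σ) = permAut n (τ * σ) := by
    apply FreeAlgebra.hom_ext
    ext i
    simp [permAut]
  exact DFunLike.congr_fun this x

lemma ab_surjective (n : ℕ) : Function.Surjective (ab n) := by
  rw [← AlgHom.range_eq_top, ← top_le_iff, ← MvPolynomial.adjoin_range_X]
  apply Algebra.adjoin_le
  rintro _ ⟨i, rfl⟩
  exact ⟨FreeAlgebra.ι ℚ i, by simp [ab]⟩

/-- The image of the invariant subalgebra `N` under abelianization is exactly the
subalgebra of symmetric polynomials. -/
theorem stmt7 (n : ℕ) :
    (Ninv n).map (ab n) = MvPolynomial.symmetricSubalgebra (Fin n) ℚ := by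
  apply le_antisymm
  · rintro _ ⟨x, hx, rfl⟩
    rw [MvPolynomial.mem_symmetricSubalgebra]
    intro σ
    show MvPolynomial.rename σ (ab n x) = ab n x
    rw [← ab_permAut, hx σ]
  · intro p hp
    rw [MvPolynomial.mem_symmetricSubalgebra] at hp
    obtain ⟨x, hx⟩ := ab_surjective n p
    set c : ℚ := (Fintype.card (Equiv.Perm (Fin n)) : ℚ)
    have hc : c ≠ 0 := Nat.cast_ne_zero.mpr Fintype.card_ne_zero
    refine ⟨c⁻¹ • ∑ σ : Equiv.Perm (Fin n), permAut n σ x, ?_, ?_⟩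
    · intro τ
      rw [map_smul, map_sum]
      congr 1
      rw [← Equiv.sum_comp (Equiv.mulLeft τ) (fun σ => permAut n σ x)]
      exact Finset.sum_congr rfl fun σ _ => permAut_comp n τ σ x
    · show ab n (c⁻¹ • ∑ σ : Equiv.Perm (Fin n), permAut n σ x) = p
      rw [map_smul, map_sum]
      have : ∀ σ : Equiv.Perm (Fin n), ab n (permAut n σ x) = p := by
        intro σ
        rw [ab_permAut, hx]
        exact hp σ
      rw [Finset.sum_congr rfl fun σ _ => this σ, Finset.sum_const, Finset.card_univ,
        ← Nat.cast_smul_eq_nsmul ℚ, smul_smul, inv_mul_cancel₀ hc, one_smul]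
end

section
/- For every integer partition μ (a multiset of positive integers), let S(μ) be the set of distinct part sizes occurring in μ, and for T ⊆ S(μ) let μ∖T be the partition obtained from μ by removing exactly one part of each size belonging to T. Let p(λ) denote the number of set partitions of Fin |λ| whose shape is λ. Then Σ_{T ⊆ S(μ)} (−1)^{|T|} · p(μ∖T) ≥ 0. -/
/-- `p(λ)`: the number of set partitions of `Fin |λ|` whose shape (multiset of block
cardinalities) is `λ`. -/
noncomputable def numOfShape (lam : Multiset ℕ) : ℕ :=
  Nat.card {P : Finset (Finset (Fin lam.sum)) //
    IsSetPartition P ∧ P.val.map Finset.card = lam}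

open Finset

/-- `P` is a set partition of the initial segment `[0, k)` inside `Fin n`. -/
def PartOn (n k : ℕ) (P : Finset (Finset (Fin n))) : Prop :=
  (∀ B ∈ P, B.Nonempty) ∧ ((P : Set (Finset (Fin n))).PairwiseDisjoint id) ∧
    ∀ i : Fin n, (i : ℕ) < k ↔ ∃ B ∈ P, i ∈ B

lemma isSetPartition_iff {d : ℕ} (P : Finset (Finset (Fin d))) :
    IsSetPartition P ↔ (∀ B ∈ P, B.Nonempty) ∧
      ((P : Set (Finset (Fin d))).PairwiseDisjoint id) ∧ ∀ i : Fin d, ∃ B ∈ P, i ∈ B := by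
  constructor
  · rintro ⟨h0, h1⟩
    refine ⟨?_, ?_, ?_⟩
    · intro B hB
      rcases Finset.eq_empty_or_nonempty B with rfl | h
      · exact absurd hB h0
      · exact h
    · intro B hB C hC hne
      rw [Function.onFun, id, id, Finset.disjoint_left]
      intro x hxB hxC
      obtain ⟨D, -, hD⟩ := h1 x
      exact hne ((hD B ⟨hB, hxB⟩).trans (hD C ⟨hC, hxC⟩).symm)
    · intro i
      obtain ⟨B, hB, -⟩ := h1 i
      exact ⟨B, hB.1, hB.2⟩
  · rintro ⟨h0, h1, h2⟩
    constructor
    · intro h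
      exact Finset.not_nonempty_empty (h0 ∅ h)
    · intro i
      obtain ⟨B, hB, hiB⟩ := h2 i
      refine ⟨B, ⟨hB, hiB⟩, ?_⟩
      rintro C ⟨hC, hiC⟩
      by_contra hne
      exact Finset.disjoint_left.mp (h1 (Finset.mem_coe.mpr hC) (Finset.mem_coe.mpr hB) hne)
        hiC hiB

/-- The interval block `[m, m+a)` viewed inside `Fin n`. -/
def ivl (n m a : ℕ) : Finset (Fin n) :=
  Finset.univ.filter (fun i => m ≤ (i : ℕ) ∧ (i : ℕ) < m + a)

lemma mem_ivl {n m a : ℕ} {i : Fin n} : i ∈ ivl n m a ↔ m ≤ (i : ℕ) ∧ (i : ℕ) < m + a := by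
  simp [ivl]

lemma card_ivl {n m a : ℕ} (h : m + a ≤ n) : (ivl n m a).card = a := by
  have hlt : ∀ x ∈ Finset.Ico m (m + a), x < n := fun x hx =>
    lt_of_lt_of_le (Finset.mem_Ico.mp hx).2 h
  have : ivl n m a = (Finset.Ico m (m + a)).attachFin hlt := by
    ext i
    simp [ivl, Finset.mem_attachFin, Finset.mem_Ico]
  rw [this, Finset.card_attachFin, Nat.card_Ico]
  omega

lemma val_le_of_subset_toFinset {μ : Multiset ℕ} {T : Finset ℕ} (hT : T ⊆ μ.toFinset) :
    T.val ≤ μ := by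
  rw [Multiset.le_iff_count]
  intro x
  by_cases hx : x ∈ T
  · have h1 : T.val.count x = 1 := Multiset.count_eq_one_of_mem T.nodup hx
    have h2 : x ∈ μ := Multiset.mem_toFinset.mp (hT hx)
    rw [h1]
    exact Multiset.one_le_count_iff_mem.mpr h2
  · rw [Multiset.count_eq_zero_of_notMem hx]
    exact Nat.zero_le _

lemma sub_erase_eq {μ : Multiset ℕ} {T : Finset ℕ} (hT : T ⊆ μ.toFinset) {a : ℕ}
    (ha : a ∈ T) : μ - (T.erase a).val = a ::ₘ (μ - T.val) := by
  have hle := val_le_of_subset_toFinset hT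
  ext x
  rw [Multiset.count_sub, Finset.erase_val, Multiset.count_cons, Multiset.count_sub]
  have hcx : T.val.count x ≤ μ.count x := Multiset.le_iff_count.mp hle x
  by_cases hxa : x = a
  · subst hxa
    rw [Multiset.count_erase_self]
    have h1 : T.val.count x = 1 := Multiset.count_eq_one_of_mem T.nodup ha
    simp [h1]
    omega
  · rw [Multiset.count_erase_of_ne hxa]
    simp [hxa]

lemma sum_sub_le {μ : Multiset ℕ} (s : Multiset ℕ) : (μ - s).sum ≤ μ.sum := by
  obtain ⟨u, hu⟩ := Multiset.le_iff_exists_add.mp (Multiset.sub_le_self μ s)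
  conv_rhs => rw [hu]
  rw [Multiset.sum_add]
  exact Nat.le_add_right _ _

section Transfer

variable {n : ℕ}

lemma numOfShape_eq (lam : Multiset ℕ) (h : lam.sum ≤ n) :
    numOfShape lam =
      Nat.card {P : Finset (Finset (Fin n)) //
        PartOn n lam.sum P ∧ P.val.map Finset.card = lam} := by
  classical
  set k := lam.sum with hk
  let e : Fin k ↪ Fin n := Fin.castLEEmb h
  let bm : Finset (Fin k) ↪ Finset (Fin n) := ⟨fun B => B.map e, Finset.map_injective e⟩
  have hshape : ∀ P : Finset (Finset (Fin k)),
      (P.map bm).val.map Finset.card = P.val.map Finset.card := by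
    intro P
    rw [Finset.map_val, Multiset.map_map]
    exact Multiset.map_congr rfl (fun B _ => Finset.card_map _)
  have hpart : ∀ P : Finset (Finset (Fin k)),
      IsSetPartition P ↔ PartOn n k (P.map bm) := by
    intro P
    rw [isSetPartition_iff]
    constructor
    · rintro ⟨h0, h1, h2⟩
      refine ⟨?_, ?_, ?_⟩
      · intro B' hB'
        obtain ⟨B, hB, rfl⟩ := Finset.mem_map.mp hB'
        exact (Finset.map_nonempty).mpr (h0 B hB)
      · intro B' hB' C' hC' hne
        obtain ⟨B, hB, rfl⟩ := Finset.mem_map.mp hB'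
        obtain ⟨C, hC, rfl⟩ := Finset.mem_map.mp hC'
        have hBC : B ≠ C := fun hh => hne (by rw [hh])
        have := h1 (Finset.mem_coe.mpr hB) (Finset.mem_coe.mpr hC) hBC
        rw [Function.onFun, id, id] at this ⊢
        exact (Finset.disjoint_map e).mpr this
      · intro i
        constructor
        · intro hi
          obtain ⟨B, hB, hjB⟩ := h2 ⟨(i : ℕ), hi⟩
          refine ⟨B.map e, Finset.mem_map_of_mem bm hB, ?_⟩
          have : e ⟨(i : ℕ), hi⟩ = i := by
            apply Fin.ext
            simp [e]
          rw [← this]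
          exact Finset.mem_map_of_mem e hjB
        · rintro ⟨B', hB', hiB'⟩
          obtain ⟨B, hB, rfl⟩ := Finset.mem_map.mp hB'
          obtain ⟨j, hj, rfl⟩ := Finset.mem_map.mp hiB'
          simpa [e] using j.isLt
    · rintro ⟨h0, h1, h2⟩
      refine ⟨?_, ?_, ?_⟩
      · intro B hB
        exact (Finset.map_nonempty).mp (h0 (B.map e) (Finset.mem_map_of_mem bm hB))
      · intro B hB C hC hne
        have hne' : B.map e ≠ C.map e := fun hh => hne (Finset.map_injective e hh)
        have := h1 (Finset.mem_coe.mpr (Finset.mem_map_of_mem bm hB))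
          (Finset.mem_coe.mpr (Finset.mem_map_of_mem bm hC)) hne'
        rw [Function.onFun, id, id] at this ⊢
        exact (Finset.disjoint_map e).mp this
      · intro j
        have hj : ((e j : Fin n) : ℕ) < k := by simpa [e] using j.isLt
        obtain ⟨B', hB', hmem⟩ := (h2 (e j)).mp hj
        obtain ⟨B, hB, rfl⟩ := Finset.mem_map.mp hB'
        exact ⟨B, hB, (Finset.mem_map' e).mp hmem⟩
  refine Nat.card_congr ?_
  refine Equiv.ofBijective (fun P => ⟨P.val.map bm, ?_, ?_⟩) ⟨?_, ?_⟩
  · exact (hpart P.val).mp P.prop.1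
  · rw [hshape]; exact P.prop.2
  · intro P Q hPQ
    apply Subtype.ext
    exact Finset.map_injective bm (congrArg Subtype.val hPQ)
  · rintro ⟨P', hP'⟩
    -- build the preimage
    have hseg : ∀ B' ∈ P', ∀ x ∈ B', (x : ℕ) < k :=
      fun B' hB' x hx => (hP'.1.2.2 x).mpr ⟨B', hB', hx⟩
    let d : Finset (Fin n) → Finset (Fin k) :=
      fun B' => Finset.univ.filter (fun j => e j ∈ B')
    have hd : ∀ B' ∈ P', (d B').map e = B' := by
      intro B' hB'
      ext x
      simp only [Finset.mem_map, Finset.mem_filter, Finset.mem_univ, true_and, d]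
      constructor
      · rintro ⟨j, hj, rfl⟩; exact hj
      · intro hx
        refine ⟨⟨(x : ℕ), hseg B' hB' x hx⟩, ?_, ?_⟩
        · have : e ⟨(x : ℕ), hseg B' hB' x hx⟩ = x := by apply Fin.ext; simp [e]
          rwa [this]
        · apply Fin.ext; simp [e]
    have himg : (P'.image d).map bm = P' := by
      rw [Finset.map_eq_image, Finset.image_image]
      have himg2 : Finset.image (⇑bm ∘ d) P' = Finset.image id P' :=
        Finset.image_congr (fun B' hB' => hd B' hB')
      rw [himg2, Finset.image_id]
    refine ⟨⟨P'.image d, ?_, ?_⟩, ?_⟩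
    · rw [hpart, himg]; exact hP'.1
    · rw [← hshape, himg]; exact hP'.2
    · apply Subtype.ext
      exact himg

end Transfer

lemma block_lt {n k : ℕ} {P : Finset (Finset (Fin n))} (hP : PartOn n k P)
    {B : Finset (Fin n)} (hB : B ∈ P) {x : Fin n} (hx : x ∈ B) : (x : ℕ) < k :=
  (hP.2.2 x).mpr ⟨B, hB, hx⟩

lemma pull_mem {n : ℕ} (μ : Multiset ℕ) (hn : μ.sum ≤ n) (hμ : ∀ x ∈ μ, 0 < x)
    (T : Finset ℕ) (hT : T ⊆ μ.toFinset) (a : ℕ) (haT : a ∈ T)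
    (P : Finset (Finset (Fin n)))
    (hP : PartOn n (μ - T.val).sum P) (hsh : P.val.map Finset.card = μ - T.val) :
    ivl n (μ - T.val).sum a ∉ P ∧
    PartOn n (μ - (T.erase a).val).sum (insert (ivl n (μ - T.val).sum a) P) ∧
    (insert (ivl n (μ - T.val).sum a) P).val.map Finset.card = μ - (T.erase a).val := by
  set m := (μ - T.val).sum with hm
  have hsub : μ - (T.erase a).val = a ::ₘ (μ - T.val) := sub_erase_eq hT haT
  have hm' : (μ - (T.erase a).val).sum = a + m := by rw [hsub, Multiset.sum_cons]
  have hapos : 0 < a := hμ a (Multiset.mem_toFinset.mp (hT haT))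
  have hman : a + m ≤ n := by
    have := sum_sub_le (μ := μ) (T.erase a).val
    omega
  set B' := ivl n m a with hB'
  have hB'card : B'.card = a := card_ivl (by omega)
  have hB'ne : B'.Nonempty := Finset.card_pos.mp (by omega)
  have hblt : ∀ B ∈ P, ∀ x ∈ B, (x : ℕ) < m := fun B hB x hx => block_lt hP hB hx
  have hB'notP : B' ∉ P := by
    intro h
    obtain ⟨x, hx⟩ := hB'ne
    have h1 := hblt B' h x hx
    have h2 := (mem_ivl.mp hx).1
    omega
  refine ⟨hB'notP, ?_, ?_⟩
  · rw [hm']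
    refine ⟨?_, ?_, ?_⟩
    · intro B hB
      rcases Finset.mem_insert.mp hB with rfl | hB
      · exact hB'ne
      · exact hP.1 B hB
    · rw [Finset.coe_insert]
      refine Set.PairwiseDisjoint.insert hP.2.1 ?_
      intro C hC hne
      simp only [id_eq]
      rw [Finset.disjoint_left]
      intro x hxB' hxC
      have h1 := (mem_ivl.mp hxB').1
      have h2 := hblt C (Finset.mem_coe.mp hC) x hxC
      omega
    · intro i
      constructor
      · intro hi
        by_cases h2 : (i : ℕ) < m
        · obtain ⟨B, hB, hiB⟩ := (hP.2.2 i).mp h2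
          exact ⟨B, Finset.mem_insert_of_mem hB, hiB⟩
        · exact ⟨B', Finset.mem_insert_self _ _, mem_ivl.mpr ⟨by omega, by omega⟩⟩
      · rintro ⟨B, hB, hiB⟩
        rcases Finset.mem_insert.mp hB with rfl | hB
        · have := (mem_ivl.mp hiB).2
          omega
        · have := hblt B hB i hiB
          omega
  · rw [Finset.insert_val_of_notMem hB'notP, Multiset.map_cons, hsh, hB'card, hsub]

/-- For an integer partition `μ` (a multiset of positive integers), with `S(μ)` the set
of distinct part sizes and `μ∖T` obtained by removing one part of each size in `T`,
we have `Σ_{T ⊆ S(μ)} (−1)^{|T|} · p(μ∖T) ≥ 0`. -/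
theorem stmt9 (μ : Multiset ℕ) (hμ : ∀ x ∈ μ, 0 < x) :
    0 ≤ ∑ T ∈ μ.toFinset.powerset, (-1 : ℤ) ^ T.card * (numOfShape (μ - T.val) : ℤ) := by
  classical
  set n := μ.sum with hn
  set E : Finset ℕ → Finset (Finset (Finset (Fin n))) := fun T =>
    Finset.univ.filter
      (fun P => PartOn n (μ - T.val).sum P ∧ P.val.map Finset.card = μ - T.val) with hE
  have hcardE : ∀ T : Finset ℕ, (numOfShape (μ - T.val) : ℤ) = ((E T).card : ℤ) := by
    intro T
    have h1 : numOfShape (μ - T.val) =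
        Nat.card {P : Finset (Finset (Fin n)) //
          PartOn n (μ - T.val).sum P ∧ P.val.map Finset.card = μ - T.val} :=
      numOfShape_eq _ (sum_sub_le _)
    rw [h1, Nat.card_eq_fintype_card, Fintype.card_subtype]
  have hrw : ∀ T ∈ μ.toFinset.powerset,
      (-1 : ℤ) ^ T.card * (numOfShape (μ - T.val) : ℤ) =
        ∑ P ∈ E T, (-1 : ℤ) ^ T.card := by
    intro T _
    rw [Finset.sum_const, hcardE T, nsmul_eq_mul]
    ring
  rw [Finset.sum_congr rfl hrw, Finset.sum_sigma']
  set Ω := (μ.toFinset.powerset).sigma (fun T => E T) with hΩ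
  rw [← Finset.sum_filter_add_sum_filter_not Ω (fun x => Even x.1.card)]
  have h1 : ∑ x ∈ Ω.filter (fun x => Even x.1.card), (-1 : ℤ) ^ x.1.card =
      ((Ω.filter (fun x => Even x.1.card)).card : ℤ) := by
    rw [Finset.sum_congr rfl (fun x hx => (Finset.mem_filter.mp hx).2.neg_one_pow)]
    simp
  have h2 : ∑ x ∈ Ω.filter (fun x => ¬Even x.1.card), (-1 : ℤ) ^ x.1.card =
      -((Ω.filter (fun x => ¬Even x.1.card)).card : ℤ) := by
    rw [Finset.sum_congr rfl
      (fun x hx => (Nat.not_even_iff_odd.mp (Finset.mem_filter.mp hx).2).neg_one_pow)]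
    simp
  rw [h1, h2]
  have key : (Ω.filter (fun x => ¬Even x.1.card)).card ≤
      (Ω.filter (fun x => Even x.1.card)).card := by
    apply Finset.card_le_card_of_injOn (fun x =>
      if h : x.1.Nonempty then
        (⟨x.1.erase (x.1.min' h),
          insert (ivl n (μ - x.1.val).sum (x.1.min' h)) x.2⟩ :
            Σ _ : Finset ℕ, Finset (Finset (Fin n))) else x)
    · intro x hx
      obtain ⟨hxΩ, hodd⟩ := Finset.mem_filter.mp hx
      obtain ⟨hx1, hx2⟩ := Finset.mem_sigma.mp hxΩ
      have hx1' : x.1 ⊆ μ.toFinset := Finset.mem_powerset.mp hx1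
      simp only [hE, Finset.mem_filter, Finset.mem_univ, true_and] at hx2
      obtain ⟨hPart, hsh⟩ := hx2
      have hne : x.1.Nonempty := by
        rw [← Finset.card_pos]
        rcases Nat.eq_zero_or_pos x.1.card with h0 | h0
        · exact absurd (h0 ▸ Even.zero) hodd
        · exact h0
      simp only [dif_pos hne, Finset.mem_coe]
      have haT : x.1.min' hne ∈ x.1 := Finset.min'_mem _ _
      obtain ⟨hnotP, hPart', hsh'⟩ :=
        pull_mem μ hn.ge hμ x.1 hx1' (x.1.min' hne) haT x.2 hPart hsh
      rw [Finset.mem_filter]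
      refine ⟨Finset.mem_sigma.mpr ⟨?_, ?_⟩, ?_⟩
      · exact Finset.mem_powerset.mpr ((Finset.erase_subset _ _).trans hx1')
      · simp only [hE, Finset.mem_filter, Finset.mem_univ, true_and]
        exact ⟨hPart', hsh'⟩
      · have hcard := Finset.card_erase_of_mem haT
        rw [Nat.not_even_iff_odd] at hodd
        obtain ⟨c, hc⟩ := hodd
        simp only [hcard, hc]
        exact ⟨c, by omega⟩
    · intro x₁ hx₁ x₂ hx₂ heq
      rw [Finset.mem_coe, Finset.mem_filter] at hx₁ hx₂
      obtain ⟨hx₁Ω, hodd₁⟩ := hx₁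
      obtain ⟨hx₂Ω, hodd₂⟩ := hx₂
      obtain ⟨h11, h12⟩ := Finset.mem_sigma.mp hx₁Ω
      obtain ⟨h21, h22⟩ := Finset.mem_sigma.mp hx₂Ω
      have hsub₁ : x₁.1 ⊆ μ.toFinset := Finset.mem_powerset.mp h11
      have hsub₂ : x₂.1 ⊆ μ.toFinset := Finset.mem_powerset.mp h21
      simp only [hE, Finset.mem_filter, Finset.mem_univ, true_and] at h12 h22
      have hne₁ : x₁.1.Nonempty := by
        rw [← Finset.card_pos]
        rcases Nat.eq_zero_or_pos x₁.1.card with h0 | h0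
        · exact absurd (h0 ▸ Even.zero) hodd₁
        · exact h0
      have hne₂ : x₂.1.Nonempty := by
        rw [← Finset.card_pos]
        rcases Nat.eq_zero_or_pos x₂.1.card with h0 | h0
        · exact absurd (h0 ▸ Even.zero) hodd₂
        · exact h0
      dsimp only at heq
      rw [dif_pos hne₁, dif_pos hne₂] at heq
      set a₁ := x₁.1.min' hne₁ with ha₁
      set a₂ := x₂.1.min' hne₂ with ha₂
      set m₁ := (μ - x₁.1.val).sum with hm₁
      set m₂ := (μ - x₂.1.val).sum with hm₂
      have haT₁ : a₁ ∈ x₁.1 := Finset.min'_mem _ _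
      have haT₂ : a₂ ∈ x₂.1 := Finset.min'_mem _ _
      obtain ⟨hT', hPins⟩ := Sigma.mk.inj_iff.mp heq
      have hP' : insert (ivl n m₁ a₁) x₁.2 = insert (ivl n m₂ a₂) x₂.2 := eq_of_heq hPins
      have hsum₁ : (μ - (x₁.1.erase a₁).val).sum = a₁ + m₁ := by
        rw [sub_erase_eq hsub₁ haT₁, Multiset.sum_cons]
      have hsum₂ : (μ - (x₂.1.erase a₂).val).sum = a₂ + m₂ := by
        rw [sub_erase_eq hsub₂ haT₂, Multiset.sum_cons]
      have hmm : a₁ + m₁ = a₂ + m₂ := by rw [← hsum₁, ← hsum₂, hT']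
      have hapos₁ : 0 < a₁ := hμ a₁ (Multiset.mem_toFinset.mp (hsub₁ haT₁))
      have hapos₂ : 0 < a₂ := hμ a₂ (Multiset.mem_toFinset.mp (hsub₂ haT₂))
      have hle₁ : a₁ + m₁ ≤ n := by
        have := sum_sub_le (μ := μ) (x₁.1.erase a₁).val
        omega
      obtain ⟨hnotP₁, hPart'₁, -⟩ :=
        pull_mem μ hn.ge hμ x₁.1 hsub₁ a₁ haT₁ x₁.2 h12.1 h12.2
      obtain ⟨hnotP₂, -, -⟩ :=
        pull_mem μ hn.ge hμ x₂.1 hsub₂ a₂ haT₂ x₂.2 h22.1 h22.2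
      rw [hsum₁] at hPart'₁
      set z : Fin n := ⟨a₁ + m₁ - 1, by omega⟩ with hz
      have hzval : (z : ℕ) = a₁ + m₁ - 1 := rfl
      have hz₁ : z ∈ ivl n m₁ a₁ := mem_ivl.mpr ⟨by omega, by omega⟩
      have hz₂ : z ∈ ivl n m₂ a₂ := mem_ivl.mpr ⟨by omega, by omega⟩
      have hB₁mem : ivl n m₁ a₁ ∈ insert (ivl n m₁ a₁) x₁.2 := Finset.mem_insert_self _ _
      have hB₂mem : ivl n m₂ a₂ ∈ insert (ivl n m₁ a₁) x₁.2 := by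
        rw [hP']; exact Finset.mem_insert_self _ _
      have hBeq : ivl n m₁ a₁ = ivl n m₂ a₂ := by
        by_contra hBne
        have hdisj := hPart'₁.2.1 (Finset.mem_coe.mpr hB₁mem) (Finset.mem_coe.mpr hB₂mem) hBne
        simp only [Function.onFun, id_eq] at hdisj
        exact Finset.disjoint_left.mp hdisj hz₁ hz₂
      have haeq : a₁ = a₂ := by
        have c1 : (ivl n m₁ a₁).card = a₁ := card_ivl (by omega)
        have c2 : (ivl n m₂ a₂).card = a₂ := card_ivl (by omega)
        rw [← c1, ← c2, hBeq]
      have hTeq : x₁.1 = x₂.1 := by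
        rw [← Finset.insert_erase haT₁, ← Finset.insert_erase haT₂, hT', haeq]
      have hmeq : m₁ = m₂ := by rw [hm₁, hm₂, hTeq]
      have hPeq : x₁.2 = x₂.2 := by
        have e1 : x₁.2 = (insert (ivl n m₁ a₁) x₁.2).erase (ivl n m₁ a₁) :=
          (Finset.erase_insert hnotP₁).symm
        rw [e1, hP', hBeq, Finset.erase_insert hnotP₂]
      obtain ⟨T₁, P₁⟩ := x₁
      obtain ⟨T₂, P₂⟩ := x₂
      simp only [Sigma.mk.inj_iff]
      exact ⟨hTeq, heq_of_eq hPeq⟩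
  have : ((Ω.filter (fun x => ¬Even x.1.card)).card : ℤ) ≤
      ((Ω.filter (fun x => Even x.1.card)).card : ℤ) := by exact_mod_cast key
  linarith
end

section
/- Every nonempty restricted growth word w can be written as a concatenation w = p₁·p₂⋯p_m of primary words, and this factorization is unique: if p₁·⋯·p_m = q₁·⋯·q_l with all p_i and q_j primary, then m = l and p_i = q_i for all i. -/
/-- The maximal letter of a word (0 for the empty word). -/
def maxL (w : List ℕ) : ℕ := w.foldr max 0

/-- A restricted growth word. -/
def IsRGW (w : List ℕ) : Prop :=
  (∀ x ∈ w, 1 ≤ x) ∧ ∀ i < w.length, w.getD i 0 ≤ maxL (w.take i) + 1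

lemma maxL_append (a b : List ℕ) : maxL (a ++ b) = max (maxL a) (maxL b) := by
  induction a with
  | nil => simp [maxL]
  | cons h t ih => simp [maxL] at *; omega

lemma rgw_nil : IsRGW [] := by constructor <;> simp [IsRGW]

lemma rgw_prefix {u v : List ℕ} (h : IsRGW (u ++ v)) : IsRGW u := by
  obtain ⟨h1, h2⟩ := h
  constructor
  · intro x hx; exact h1 x (by simp [hx])
  · intro i hi
    have hg := h2 i (by simp; omega)
    rw [List.getD_append _ _ _ _ hi] at hg
    rw [List.take_append] at hg
    have : i - u.length = 0 := by omega
    simpa [this] using hg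

lemma rgw_append {u v : List ℕ} (hu : IsRGW u) (hv : IsRGW v) : IsRGW (u ++ v) := by
  obtain ⟨hu1, hu2⟩ := hu
  obtain ⟨hv1, hv2⟩ := hv
  constructor
  · intro x hx; rcases List.mem_append.1 hx with h | h
    · exact hu1 x h
    · exact hv1 x h
  · intro i hi
    simp at hi
    by_cases hc : i < u.length
    · rw [List.getD_append _ _ _ _ hc, List.take_append]
      have : i - u.length = 0 := by omega
      rw [this, List.take_zero, List.append_nil]
      exact hu2 i hc
    · push_neg at hc
      rw [List.getD_append_right _ _ _ _ hc, List.take_append]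
      have htu : u.take i = u := List.take_of_length_le (by omega)
      rw [htu, maxL_append]
      have := hv2 (i - u.length) (by omega)
      omega

lemma rgw_flatten {ps : List (List ℕ)} (h : ∀ p ∈ ps, IsRGW p) : IsRGW ps.flatten := by
  induction ps with
  | nil => simpa using rgw_nil
  | cons p t ih =>
      simp only [List.flatten_cons]
      exact rgw_append (h p (by simp)) (ih (fun q hq => h q (by simp [hq])))

/-- A primary word: a nonempty restricted growth word none of whose proper nonempty
suffixes is a restricted growth word. -/
def IsPrimary (w : List ℕ) : Prop :=
  IsRGW w ∧ w ≠ [] ∧ ∀ t s : List ℕ, w = t ++ s → t ≠ [] → s ≠ [] → ¬ IsRGW s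

lemma flatten_nil_of_primary {ps : List (List ℕ)} (h : ∀ p ∈ ps, IsPrimary p)
    (hf : ps.flatten = []) : ps = [] := by
  cases ps with
  | nil => rfl
  | cons p t =>
      exfalso
      have hp := (h p (by simp)).2.1
      simp only [List.flatten_cons, List.append_eq_nil_iff] at hf
      exact hp hf.1

lemma primary_len_le {p q a b : List ℕ} (hq : IsPrimary q) (ha : IsRGW a)
    (heq : q ++ b = p ++ a) (hp : p ≠ []) : q.length ≤ p.length := by
  by_contra hlt
  push_neg at hlt
  have hpl : 0 < p.length := List.length_pos_iff.2 hp
  have hdrop : a = q.drop p.length ++ b := by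
    have h1 : (q ++ b).drop p.length = (p ++ a).drop p.length := by rw [heq]
    rw [List.drop_append, List.drop_append] at h1
    have h2 : p.length - q.length = 0 := by omega
    have h3 : p.drop p.length = [] := by simp
    simp [h2, h3] at h1
    exact h1.symm
  have hrgw : IsRGW (q.drop p.length) := by
    rw [hdrop] at ha; exact rgw_prefix ha
  refine hq.2.2 (q.take p.length) (q.drop p.length) (by simp)
    ?_ ?_ hrgw
  · intro h
    have h2 : (q.take p.length).length = 0 := by rw [h]; rfl
    rw [List.length_take] at h2; omega
  · intro h
    have h2 : (q.drop p.length).length = 0 := by rw [h]; rfl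
    rw [List.length_drop] at h2; omega

lemma primary_uniq : ∀ ps qs : List (List ℕ), (∀ p ∈ ps, IsPrimary p) →
    (∀ q ∈ qs, IsPrimary q) → ps.flatten = qs.flatten → ps = qs := by
  intro ps
  induction ps with
  | nil =>
      intro qs _ hq hf
      exact (flatten_nil_of_primary hq (by simpa using hf.symm)).symm
  | cons p t ih =>
      intro qs hp hq hf
      cases qs with
      | nil =>
          exfalso
          simp only [List.flatten_nil] at hf
          have := flatten_nil_of_primary hp hf
          simp at this
      | cons q s =>
          simp only [List.flatten_cons] at hf
          have hpprim := hp p (by simp)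
          have hqprim := hq q (by simp)
          have hta : IsRGW t.flatten := rgw_flatten (fun x hx => (hp x (by simp [hx])).1)
          have hsa : IsRGW s.flatten := rgw_flatten (fun x hx => (hq x (by simp [hx])).1)
          have hlen : p.length = q.length :=
            le_antisymm (primary_len_le hpprim hsa hf hqprim.2.1)
              (primary_len_le hqprim hta hf.symm hpprim.2.1)
          obtain ⟨hpq, hts⟩ := List.append_inj hf hlen
          have : t = s := ih s (fun x hx => hp x (by simp [hx]))
            (fun x hx => hq x (by simp [hx])) hts
          rw [hpq, this]

lemma primary_ex : ∀ n : ℕ, ∀ w : List ℕ, w.length ≤ n → IsRGW w → w ≠ [] →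
    ∃ ps : List (List ℕ), (∀ p ∈ ps, IsPrimary p) ∧ ps.flatten = w := by
  intro n
  induction n with
  | zero => intro w hl _ hne; simp [List.length_eq_zero_iff.1 (Nat.le_zero.1 hl)] at hne
  | succ n ih =>
      intro w hl hw hne
      classical
      have hP : ∃ i, 0 < i ∧ i ≤ w.length ∧ IsRGW (w.drop i) := by
        refine ⟨w.length, List.length_pos_iff.2 hne, le_refl _, by simp [rgw_nil]⟩
      obtain k := Nat.find hP
      have hk := Nat.find_spec hP
      set k := Nat.find hP with hkdef
      obtain ⟨hk0, hkle, hkr⟩ := hk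
      have hmin : ∀ j, j < k → ¬(0 < j ∧ j ≤ w.length ∧ IsRGW (w.drop j)) :=
        fun j hj => Nat.find_min hP hj
      set p := w.take k with hpdef
      set r := w.drop k with hrdef
      have hwpr : w = p ++ r := (List.take_append_drop k w).symm
      have hplen : p.length = k := by simp [hpdef]; omega
      have hpne : p ≠ [] := by
        intro h; rw [h] at hplen; simp at hplen; omega
      have hpprim : IsPrimary p := by
        refine ⟨rgw_prefix (hwpr ▸ hw), hpne, ?_⟩
        intro t s hts htne hsne hsrgw
        have htlen : 0 < t.length := List.length_pos_iff.2 htne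
        have hslen : 0 < s.length := List.length_pos_iff.2 hsne
        have hts' : t.length + s.length = k := by
          have := congrArg List.length hts; simp at this; omega
        have hdropt : w.drop t.length = s ++ r := by
          rw [hwpr, hts, List.append_assoc, List.drop_append]
          simp
        refine hmin t.length (by omega) ⟨htlen, ?_, ?_⟩
        · omega
        · rw [hdropt]; exact rgw_append hsrgw hkr
      by_cases hr : r = []
      · refine ⟨[p], by simpa using hpprim, ?_⟩
        simp [hwpr, hr]
      · have hrlen : r.length ≤ n := by
          have : r.length = w.length - k := by simp [hrdef]
          omega
        obtain ⟨ps, hps1, hps2⟩ := ih r hrlen hkr hr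
        refine ⟨p :: ps, ?_, by simp [hps2, hwpr]⟩
        intro x hx
        rcases List.mem_cons.1 hx with h | h
        · rw [h]; exact hpprim
        · exact hps1 x h

/-- Every nonempty restricted growth word has a unique factorization as a concatenation
of primary words. -/
theorem stmt11 (w : List ℕ) (hw : IsRGW w) (hne : w ≠ []) :
    ∃! ps : List (List ℕ), (∀ p ∈ ps, IsPrimary p) ∧ ps.flatten = w := by
  obtain ⟨ps, h1, h2⟩ := primary_ex w.length w le_rfl hw hne
  refine ⟨ps, ⟨h1, h2⟩, ?_⟩
  intro qs ⟨hq1, hq2⟩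
  exact primary_uniq qs ps hq1 h1 (by rw [h2, hq2])
end

section
/- Every set partition of {1,…,d} (d ≥ 1) can be written as a splitting A₁ | A₂ | ⋯ | A_r of atomic set partitions, and this factorization is unique: if A₁|⋯|A_r = B₁|⋯|B_s with all A_i and B_j atomic, then r = s and A_i = B_i for all i. -/
/-- `P` is a set partition of `{1,…,d}`: its blocks are nonempty subsets of `{1,…,d}`
and every element of `{1,…,d}` lies in exactly one block. -/
def IsPartitionOf (P : Finset (Finset ℕ)) (d : ℕ) : Prop :=
  (∀ B ∈ P, B ≠ ∅ ∧ B ⊆ Finset.Icc 1 d) ∧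
    ∀ i ∈ Finset.Icc 1 d, ∃! B, B ∈ P ∧ i ∈ B

/-- Shift every element of every block up by `k`. -/
def shiftP (P : Finset (Finset ℕ)) (k : ℕ) : Finset (Finset ℕ) :=
  P.image fun B => B.image (· + k)

/-- The total size of a set partition (the cardinality of its underlying set). -/
def psize (P : Finset (Finset ℕ)) : ℕ := ∑ B ∈ P, B.card

/-- An atomic set partition: a nonempty set partition of `{1,…,d}` (for `d` its size)
which cannot be written as a splitting `B | C` of two nonempty set partitions. -/
def IsAtomicPart (A : Finset (Finset ℕ)) : Prop :=
  A ≠ ∅ ∧ IsPartitionOf A (psize A) ∧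
    ¬ ∃ (B C : Finset (Finset ℕ)) (c e : ℕ),
        IsPartitionOf B c ∧ IsPartitionOf C e ∧ B ≠ ∅ ∧ C ≠ ∅ ∧ A = B ∪ shiftP C c

/-- The iterated splitting `A₁ | A₂ | ⋯ | A_r` of a list of set partitions. -/
def splitList : List (Finset (Finset ℕ)) → Finset (Finset ℕ)
  | [] => ∅
  | A :: L => A ∪ shiftP (splitList L) (psize A)

open Finset

lemma mem_shiftP {P : Finset (Finset ℕ)} {k : ℕ} {T : Finset ℕ} :
    T ∈ shiftP P k ↔ ∃ B ∈ P, B.image (· + k) = T := Finset.mem_image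

lemma partition_psize {P : Finset (Finset ℕ)} {d : ℕ} (hP : IsPartitionOf P d) :
    psize P = d := by
  obtain ⟨hb, hu⟩ := hP
  have hdisj : ∀ T ∈ P, ∀ S ∈ P, T ≠ S → Disjoint (id T) (id S) := by
    intro T hT S hS hne
    rw [id, id, Finset.disjoint_left]
    intro x hxT hxS
    have hx : x ∈ Finset.Icc 1 d := (hb T hT).2 hxT
    obtain ⟨U, _, hUuniq⟩ := hu x hx
    exact hne ((hUuniq T ⟨hT, hxT⟩).trans (hUuniq S ⟨hS, hxS⟩).symm)
  have hun : P.biUnion id = Finset.Icc 1 d := by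
    ext x
    simp only [Finset.mem_biUnion, id]
    constructor
    · rintro ⟨T, hT, hxT⟩; exact (hb T hT).2 hxT
    · intro hx
      obtain ⟨U, ⟨hU, hxU⟩, _⟩ := hu x hx
      exact ⟨U, hU, hxU⟩
  have h1 := Finset.card_biUnion hdisj
  have : psize P = (P.biUnion id).card := by
    rw [h1]; rfl
  rw [this, hun, Nat.card_Icc]; omega

lemma partition_nonempty {P : Finset (Finset ℕ)} {d : ℕ} (hP : IsPartitionOf P d)
    (hd : 1 ≤ d) : P ≠ ∅ := by
  obtain ⟨U, ⟨hU, _⟩, _⟩ := hP.2 1 (by simp [Finset.mem_Icc]; omega)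
  exact fun h => by simp [h] at hU

lemma partition_pos {P : Finset (Finset ℕ)} {d : ℕ} (hP : IsPartitionOf P d)
    (hne : P ≠ ∅) : 1 ≤ d := by
  obtain ⟨T, hT⟩ := Finset.nonempty_iff_ne_empty.mpr hne
  obtain ⟨hTne, hTsub⟩ := hP.1 T hT
  obtain ⟨x, hx⟩ := Finset.nonempty_iff_ne_empty.mpr hTne
  have := hTsub hx
  rw [Finset.mem_Icc] at this
  omega

lemma partition_zero {P : Finset (Finset ℕ)} (hP : IsPartitionOf P 0) : P = ∅ := by
  by_contra h
  have := partition_pos hP h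
  omega

lemma shiftP_injective (k : ℕ) : Function.Injective (fun P => shiftP P k) := by
  have h1 : Function.Injective (fun B : Finset ℕ => B.image (· + k)) :=
    Finset.image_injective (add_left_injective k)
  exact Finset.image_injective h1

lemma shiftP_block_prop {C : Finset (Finset ℕ)} {e c : ℕ} (hC : IsPartitionOf C e)
    {T : Finset ℕ} (hT : T ∈ shiftP C c) :
    T ≠ ∅ ∧ ∀ x ∈ T, c + 1 ≤ x ∧ x ≤ e + c := by
  obtain ⟨S, hS, rfl⟩ := mem_shiftP.mp hT
  obtain ⟨hSne, hSsub⟩ := hC.1 S hS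
  constructor
  · simp only [ne_eq, Finset.image_eq_empty]; exact hSne
  · intro x hx
    obtain ⟨y, hy, rfl⟩ := Finset.mem_image.mp hx
    have := hSsub hy; rw [Finset.mem_Icc] at this; omega

lemma split_isPartition {B C : Finset (Finset ℕ)} {c e : ℕ}
    (hB : IsPartitionOf B c) (hC : IsPartitionOf C e) :
    IsPartitionOf (B ∪ shiftP C c) (c + e) := by
  constructor
  · intro T hT
    rcases Finset.mem_union.mp hT with hT | hT
    · obtain ⟨h1, h2⟩ := hB.1 T hT
      refine ⟨h1, fun x hx => ?_⟩
      have := h2 hx; rw [Finset.mem_Icc] at this ⊢; omega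
    · obtain ⟨h1, h2⟩ := shiftP_block_prop hC hT
      refine ⟨h1, fun x hx => ?_⟩
      have := h2 x hx; rw [Finset.mem_Icc]; omega
  · intro i hi
    rw [Finset.mem_Icc] at hi
    by_cases hic : i ≤ c
    · obtain ⟨T, ⟨hT, hiT⟩, hTuniq⟩ := hB.2 i (by rw [Finset.mem_Icc]; omega)
      refine ⟨T, ⟨Finset.mem_union_left _ hT, hiT⟩, ?_⟩
      rintro T' ⟨hT', hiT'⟩
      rcases Finset.mem_union.mp hT' with h | h
      · exact hTuniq T' ⟨h, hiT'⟩
      · have := (shiftP_block_prop hC h).2 i hiT'; omega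
    · obtain ⟨S, ⟨hS, hiS⟩, hSuniq⟩ := hC.2 (i - c) (by rw [Finset.mem_Icc]; omega)
      refine ⟨S.image (· + c), ⟨Finset.mem_union_right _ (mem_shiftP.mpr ⟨S, hS, rfl⟩),
        Finset.mem_image.mpr ⟨i - c, hiS, by omega⟩⟩, ?_⟩
      rintro T' ⟨hT', hiT'⟩
      rcases Finset.mem_union.mp hT' with h | h
      · have := (hB.1 T' h).2 hiT'; rw [Finset.mem_Icc] at this; omega
      · obtain ⟨S', hS', rfl⟩ := mem_shiftP.mp h
        obtain ⟨y, hy, hyi⟩ := Finset.mem_image.mp hiT'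
        have : S' = S := hSuniq S' ⟨hS', by
          have : y = i - c := by omega
          rwa [← this]⟩
        rw [this]

lemma filter_self_partition {A : Finset (Finset ℕ)} {d : ℕ} (hA : IsPartitionOf A d) :
    A.filter (· ⊆ Finset.Icc 1 d) = A := by
  apply Finset.filter_true_of_mem
  intro T hT
  exact (hA.1 T hT).2

lemma unsplit {A : Finset (Finset ℕ)} {d c : ℕ} (hA : IsPartitionOf A d)
    (hc1 : 1 ≤ c) (hcd : c ≤ d)
    (hf : IsPartitionOf (A.filter (· ⊆ Finset.Icc 1 c)) c) :
    ∃ C, IsPartitionOf C (d - c) ∧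
      A = (A.filter (· ⊆ Finset.Icc 1 c)) ∪ shiftP C c := by
  classical
  set B := A.filter (· ⊆ Finset.Icc 1 c) with hBdef
  set C0 := A \ B with hC0def
  have hkey : ∀ T ∈ C0, ∀ x ∈ T, c + 1 ≤ x ∧ x ≤ d := by
    intro T hT x hx
    rw [hC0def, Finset.mem_sdiff] at hT
    obtain ⟨hTA, hTnB⟩ := hT
    have hxd := (hA.1 T hTA).2 hx
    rw [Finset.mem_Icc] at hxd
    refine ⟨?_, hxd.2⟩
    by_contra hxc
    push_neg at hxc
    have hxIcc : x ∈ Finset.Icc 1 c := by rw [Finset.mem_Icc]; omega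
    obtain ⟨S, ⟨hS, hxS⟩, _⟩ := hf.2 x hxIcc
    rw [Finset.mem_filter] at hS
    obtain ⟨U, _, hUuniq⟩ := hA.2 x (by rw [Finset.mem_Icc] at hxIcc ⊢; omega)
    have h1 : S = U := hUuniq S ⟨hS.1, hxS⟩
    have h2 : T = U := hUuniq T ⟨hTA, hx⟩
    apply hTnB
    rw [hBdef, Finset.mem_filter]
    have : T = S := by rw [h2, ← h1]
    exact ⟨hTA, this ▸ hS.2⟩
  refine ⟨C0.image (fun S => S.image (· - c)), ?_, ?_⟩
  · constructor
    · intro S hS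
      obtain ⟨T, hT, rfl⟩ := Finset.mem_image.mp hS
      have hTA : T ∈ A := (Finset.mem_sdiff.mp hT).1
      constructor
      · simp only [ne_eq, Finset.image_eq_empty]; exact (hA.1 T hTA).1
      · intro x hx
        obtain ⟨y, hy, rfl⟩ := Finset.mem_image.mp hx
        have := hkey T hT y hy
        rw [Finset.mem_Icc]; omega
    · intro i hi
      rw [Finset.mem_Icc] at hi
      obtain ⟨T, ⟨hTA, hiT⟩, hTuniq⟩ := hA.2 (i + c) (by rw [Finset.mem_Icc]; omega)
      have hTC0 : T ∈ C0 := by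
        rw [hC0def, Finset.mem_sdiff]
        refine ⟨hTA, fun hTB => ?_⟩
        rw [hBdef, Finset.mem_filter] at hTB
        have := hTB.2 hiT
        rw [Finset.mem_Icc] at this; omega
      refine ⟨T.image (· - c), ⟨Finset.mem_image.mpr ⟨T, hTC0, rfl⟩,
        Finset.mem_image.mpr ⟨i + c, hiT, by omega⟩⟩, ?_⟩
      rintro S' ⟨hS', hiS'⟩
      obtain ⟨T', hT', rfl⟩ := Finset.mem_image.mp hS'
      obtain ⟨y, hy, hyi⟩ := Finset.mem_image.mp hiS'
      have hy1 := hkey T' hT' y hy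
      have : y = i + c := by omega
      subst this
      have : T' = T := hTuniq T' ⟨(Finset.mem_sdiff.mp hT').1, hy⟩
      rw [this]
  · have himg : shiftP (C0.image (fun S => S.image (· - c))) c = C0 := by
      rw [shiftP, Finset.image_image]
      have heq : ∀ T ∈ C0,
          ((fun B : Finset ℕ => Finset.image (· + c) B) ∘ (fun S => S.image (· - c))) T = T := by
        intro T hT
        simp only [Function.comp_apply]
        ext x
        simp only [Finset.mem_image]
        constructor
        · rintro ⟨y, ⟨z, hz, rfl⟩, rfl⟩
          have hz1 := hkey T hT z hz
          have : z - c + c = z := by omega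
          rwa [this]
        · intro hx
          exact ⟨x - c, ⟨x, hx, rfl⟩, by have := hkey T hT x hx; omega⟩
      calc C0.image ((fun B : Finset ℕ => Finset.image (· + c) B) ∘ (fun S => S.image (· - c)))
          = C0.image id := Finset.image_congr (fun T hT => heq T hT)
        _ = C0 := Finset.image_id
    rw [himg, hC0def, Finset.union_sdiff_of_subset (Finset.filter_subset _ _)]

lemma head_eq_filter {A A₁ C : Finset (Finset ℕ)} {c e : ℕ}
    (hA₁ : IsPartitionOf A₁ c) (hC : IsPartitionOf C e)
    (hsplit : A = A₁ ∪ shiftP C c) :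
    A₁ = A.filter (· ⊆ Finset.Icc 1 c) := by
  ext T
  rw [Finset.mem_filter]
  constructor
  · intro hT
    refine ⟨hsplit ▸ Finset.mem_union_left _ hT, (hA₁.1 T hT).2⟩
  · rintro ⟨hT, hsub⟩
    rw [hsplit] at hT
    rcases Finset.mem_union.mp hT with h | h
    · exact h
    · obtain ⟨hne, hgt⟩ := shiftP_block_prop hC h
      obtain ⟨x, hx⟩ := Finset.nonempty_iff_ne_empty.mpr hne
      have h1 := (hgt x hx).1
      have h2 := hsub hx; rw [Finset.mem_Icc] at h2
      omega

lemma splitList_isPartition : ∀ L : List (Finset (Finset ℕ)), (∀ P ∈ L, IsAtomicPart P) →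
    ∃ e, IsPartitionOf (splitList L) e := by
  intro L
  induction L with
  | nil =>
    intro _
    refine ⟨0, fun B hB => absurd hB (by simp [splitList]), fun i hi => ?_⟩
    rw [Finset.mem_Icc] at hi; omega
  | cons P L ih =>
    intro h
    obtain ⟨e, he⟩ := ih (fun Q hQ => h Q (List.mem_cons_of_mem _ hQ))
    have hP := h P (List.mem_cons_self)
    exact ⟨psize P + e, split_isPartition hP.2.1 he⟩

lemma not_lt_split {A A₁ B₁ C D : Finset (Finset ℕ)} {c c' e e' : ℕ}
    (h1 : IsAtomicPart A₁) (hc : psize A₁ = c) (hC : IsPartitionOf C e)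
    (hs1 : A = A₁ ∪ shiftP C c)
    (h2 : IsAtomicPart B₁) (hc' : psize B₁ = c') (hD : IsPartitionOf D e')
    (hs2 : A = B₁ ∪ shiftP D c') : ¬ c' < c := by
  intro hlt
  have hA₁p : IsPartitionOf A₁ c := by rw [← hc]; exact h1.2.1
  have hB₁p : IsPartitionOf B₁ c' := by rw [← hc']; exact h2.2.1
  have hA₁f : A₁ = A.filter (· ⊆ Finset.Icc 1 c) := head_eq_filter hA₁p hC hs1
  have hB₁f : B₁ = A.filter (· ⊆ Finset.Icc 1 c') := head_eq_filter hB₁p hD hs2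
  have hc'1 : 1 ≤ c' := partition_pos hB₁p h2.1
  have hfB : A₁.filter (· ⊆ Finset.Icc 1 c') = B₁ := by
    ext T
    rw [Finset.mem_filter, hA₁f, Finset.mem_filter, hB₁f, Finset.mem_filter]
    constructor
    · rintro ⟨⟨hTA, _⟩, hsub⟩; exact ⟨hTA, hsub⟩
    · rintro ⟨hTA, hsub⟩
      refine ⟨⟨hTA, fun x hx => ?_⟩, hsub⟩
      have := hsub hx; rw [Finset.mem_Icc] at this ⊢; omega
  obtain ⟨C'', hC'', hsplit⟩ := unsplit hA₁p hc'1 (le_of_lt hlt)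
    (by rw [hfB]; exact hB₁p)
  apply h1.2.2
  refine ⟨B₁, C'', c', c - c', hB₁p, hC'', h2.1, ?_, by rw [hsplit, hfB]⟩
  exact partition_nonempty hC'' (by omega)

lemma exists_fact : ∀ d, ∀ A : Finset (Finset ℕ), 1 ≤ d → IsPartitionOf A d →
    ∃ L, (∀ P ∈ L, IsAtomicPart P) ∧ splitList L = A := by
  intro d
  induction d using Nat.strong_induction_on with
  | _ d ih =>
    intro A hd hA
    classical
    let Q : ℕ → Prop := fun c => 1 ≤ c ∧ c ≤ d ∧
      IsPartitionOf (A.filter (· ⊆ Finset.Icc 1 c)) c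
    have hQd : Q d := ⟨hd, le_refl d, by rw [filter_self_partition hA]; exact hA⟩
    have hex : ∃ c, Q c := ⟨d, hQd⟩
    obtain ⟨hc1, hcd, hf⟩ := Nat.find_spec hex
    set c := Nat.find hex with hcdef
    set head := A.filter (· ⊆ Finset.Icc 1 c) with hhead
    have hhps : psize head = c := partition_psize hf
    have hatom : IsAtomicPart head := by
      refine ⟨partition_nonempty hf hc1, by rw [hhps]; exact hf, ?_⟩
      rintro ⟨B, C', c', e', hB, hC', hBne, hC'ne, hsplit⟩
      have hc'1 : 1 ≤ c' := partition_pos hB hBne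
      have he'1 : 1 ≤ e' := partition_pos hC' hC'ne
      have hp2 : IsPartitionOf head (c' + e') := by
        rw [hsplit]; exact split_isPartition hB hC'
      have hce : c = c' + e' := by rw [← partition_psize hf, partition_psize hp2]
      have hc'lt : c' < c := by omega
      have hBf : B = head.filter (· ⊆ Finset.Icc 1 c') := head_eq_filter hB hC' hsplit
      have hQc' : Q c' := by
        refine ⟨hc'1, by omega, ?_⟩
        have hff : A.filter (· ⊆ Finset.Icc 1 c') = B := by
          ext T
          rw [Finset.mem_filter, hBf, Finset.mem_filter, hhead, Finset.mem_filter]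
          constructor
          · rintro ⟨hTA, hsub⟩
            refine ⟨⟨hTA, fun x hx => ?_⟩, hsub⟩
            have := hsub hx; rw [Finset.mem_Icc] at this ⊢; omega
          · rintro ⟨⟨hTA, _⟩, hsub⟩; exact ⟨hTA, hsub⟩
        rw [hff]; exact hB
      exact Nat.find_min hex (by rw [← hcdef]; exact hc'lt) hQc'
    obtain ⟨C, hC, hACeq⟩ := unsplit hA hc1 hcd hf
    by_cases hcd' : c < d
    · obtain ⟨L', hL'atom, hL'split⟩ := ih (d - c) (by omega) C (by omega) hC
      refine ⟨head :: L', ?_, ?_⟩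
      · intro P hP
        rcases List.mem_cons.mp hP with rfl | hP
        · exact hatom
        · exact hL'atom P hP
      · show head ∪ shiftP (splitList L') (psize head) = A
        rw [hL'split, hhps, ← hACeq]
    · have hceq : c = d := by omega
      have hC0 : C = ∅ := by
        apply partition_zero
        have : d - c = 0 := by omega
        rwa [this] at hC
      refine ⟨[head], ?_, ?_⟩
      · intro P hP
        rcases List.mem_cons.mp hP with rfl | hP
        · exact hatom
        · simp at hP
      · show head ∪ shiftP (splitList []) (psize head) = A
        rw [hACeq, hC0, hhps]
        rfl

lemma uniq_fact : ∀ d, ∀ A : Finset (Finset ℕ), IsPartitionOf A d →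
    ∀ L M, ((∀ P ∈ L, IsAtomicPart P) ∧ splitList L = A) →
      ((∀ P ∈ M, IsAtomicPart P) ∧ splitList M = A) → L = M := by
  intro d
  induction d using Nat.strong_induction_on with
  | _ d ih =>
    rintro A hA L M ⟨hLa, hLs⟩ ⟨hMa, hMs⟩
    by_cases hd : 1 ≤ d
    · have hAne : A ≠ ∅ := partition_nonempty hA hd
      cases L with
      | nil => exact absurd hLs.symm hAne
      | cons A₁ L' =>
      cases M with
      | nil => exact absurd hMs.symm hAne
      | cons B₁ M' =>
        have hA₁a : IsAtomicPart A₁ := hLa _ (List.mem_cons_self)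
        have hB₁a : IsAtomicPart B₁ := hMa _ (List.mem_cons_self)
        obtain ⟨e, hCe⟩ := splitList_isPartition L'
          (fun P hP => hLa P (List.mem_cons_of_mem _ hP))
        obtain ⟨e', hDe⟩ := splitList_isPartition M'
          (fun P hP => hMa P (List.mem_cons_of_mem _ hP))
        have hs1 : A = A₁ ∪ shiftP (splitList L') (psize A₁) := hLs.symm
        have hs2 : A = B₁ ∪ shiftP (splitList M') (psize B₁) := hMs.symm
        have hcc : psize A₁ = psize B₁ := by
          have h1 := not_lt_split hA₁a rfl hCe hs1 hB₁a rfl hDe hs2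
          have h2 := not_lt_split hB₁a rfl hDe hs2 hA₁a rfl hCe hs1
          omega
        have hA₁p : IsPartitionOf A₁ (psize A₁) := hA₁a.2.1
        have hB₁p : IsPartitionOf B₁ (psize B₁) := hB₁a.2.1
        have hheads : A₁ = B₁ := by
          rw [head_eq_filter hA₁p hCe hs1, head_eq_filter hB₁p hDe hs2, hcc]
        have hdisj1 : Disjoint A₁ (shiftP (splitList L') (psize A₁)) := by
          rw [Finset.disjoint_left]
          intro T hT hT'
          obtain ⟨hTne, hgt⟩ := shiftP_block_prop hCe hT'
          obtain ⟨x, hx⟩ := Finset.nonempty_iff_ne_empty.mpr hTne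
          have h1 := (hgt x hx).1
          have h2 := (hA₁p.1 T hT).2 hx
          rw [Finset.mem_Icc] at h2
          omega
        have hdisj2 : Disjoint A₁ (shiftP (splitList M') (psize B₁)) := by
          rw [Finset.disjoint_left]
          intro T hT hT'
          obtain ⟨hTne, hgt⟩ := shiftP_block_prop hDe hT'
          obtain ⟨x, hx⟩ := Finset.nonempty_iff_ne_empty.mpr hTne
          have h1 := (hgt x hx).1
          have h2 := (hA₁p.1 T hT).2 hx
          rw [Finset.mem_Icc] at h2
          omega
        have htails : shiftP (splitList L') (psize A₁) = shiftP (splitList M') (psize B₁) := by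
          have hu : A₁ ∪ shiftP (splitList L') (psize A₁)
              = A₁ ∪ shiftP (splitList M') (psize B₁) := by
            rw [← hs1, hheads]
            exact hs2
          calc shiftP (splitList L') (psize A₁)
              = (A₁ ∪ shiftP (splitList L') (psize A₁)) \ A₁ :=
                (Finset.union_sdiff_cancel_left hdisj1).symm
            _ = (A₁ ∪ shiftP (splitList M') (psize B₁)) \ A₁ := by rw [hu]
            _ = shiftP (splitList M') (psize B₁) :=
                Finset.union_sdiff_cancel_left hdisj2
        have hsplitEq : splitList L' = splitList M' := by
          rw [← hcc] at htails
          exact shiftP_injective (psize A₁) htails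
        have hc1 : 1 ≤ psize A₁ := partition_pos hA₁p hA₁a.1
        have hde : d = psize A₁ + e := by
          have hp : IsPartitionOf A (psize A₁ + e) := by
            rw [hs1]; exact split_isPartition hA₁p hCe
          rw [← partition_psize hA, partition_psize hp]
        have hLM : L' = M' := by
          refine ih e (by omega) (splitList L') hCe L' M'
            ⟨fun P hP => hLa P (List.mem_cons_of_mem _ hP), rfl⟩
            ⟨fun P hP => hMa P (List.mem_cons_of_mem _ hP), hsplitEq.symm⟩
        rw [hheads, hLM]
    · have hd0 : d = 0 := by omega
      subst hd0
      have hAe : A = ∅ := partition_zero hA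
      have key : ∀ N : List (Finset (Finset ℕ)), (∀ P ∈ N, IsAtomicPart P) →
          splitList N = ∅ → N = [] := by
        intro N hNa hNs
        cases N with
        | nil => rfl
        | cons P N' =>
          exfalso
          have hPe : P = ∅ := by
            have hsub : P ⊆ (∅ : Finset (Finset ℕ)) := by
              rw [← hNs]; exact Finset.subset_union_left
            exact Finset.subset_empty.mp hsub
          exact (hNa P (List.mem_cons_self)).1 hPe
      rw [key L hLa (hLs.trans hAe), key M hMa (hMs.trans hAe)]

/-- Every set partition of `{1,…,d}` (`d ≥ 1`) has a unique factorization as a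
splitting of atomic set partitions. -/
theorem stmt12 (d : ℕ) (hd : 1 ≤ d) (A : Finset (Finset ℕ)) (hA : IsPartitionOf A d) :
    ∃! L : List (Finset (Finset ℕ)), (∀ P ∈ L, IsAtomicPart P) ∧ splitList L = A := by
  obtain ⟨L, hL⟩ := exists_fact d A hd hA
  exact ⟨L, hL, fun M hM => uniq_fact d A hA M L hM hL⟩
end

section
/- Let K = ℚ and n ≥ 1. Let A be a set partition of Fin c and B a set partition of Fin e, each with at most n blocks. Then in FreeAlgebra K (Fin n), m_A · m_B = Σ_{C ∈ A ⧢ B} m_C, where the sum is over all set partitions C of Fin (c+e) in the quasi-shuffle of A and B (with the convention that m_C = 0 when C has more than n blocks). -/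
/-- The first block of a set partition: the block containing the overall minimum
(computed as the union of the blocks whose minimum equals the overall minimum). -/
def firstBlock (P : Finset (Finset ℕ)) : Finset ℕ :=
  (P.filter fun B => B.min = (P.sup id).min).sup id

open Finset

/-- `P` is a set partition of the finset `S`. -/
def IsPartOn (P : Finset (Finset ℕ)) (S : Finset ℕ) : Prop :=
  (∀ B ∈ P, B ≠ ∅ ∧ B ⊆ S) ∧ ∀ i ∈ S, ∃! B, B ∈ P ∧ i ∈ B

lemma IsPartOn.unique {P : Finset (Finset ℕ)} {S : Finset ℕ} (hP : IsPartOn P S)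
    {D₁ D₂ : Finset ℕ} {i : ℕ} (h1 : D₁ ∈ P) (h2 : D₂ ∈ P) (hi1 : i ∈ D₁) (hi2 : i ∈ D₂) :
    D₁ = D₂ := by
  have hiS : i ∈ S := (hP.1 D₁ h1).2 hi1
  obtain ⟨D, -, hu⟩ := hP.2 i hiS
  rw [hu D₁ ⟨h1, hi1⟩, hu D₂ ⟨h2, hi2⟩]

lemma IsPartOn.notMem_empty {P : Finset (Finset ℕ)} {S : Finset ℕ} (hP : IsPartOn P S) :
    (∅ : Finset ℕ) ∉ P := fun h => (hP.1 ∅ h).1 rfl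

lemma IsPartOn.eq_empty_left {P : Finset (Finset ℕ)} {S : Finset ℕ} (hP : IsPartOn P S)
    (hS : S = ∅) : P = ∅ := by
  subst hS
  rcases P.eq_empty_or_nonempty with h | ⟨D, hD⟩
  · exact h
  · obtain ⟨hne, hsub⟩ := hP.1 D hD
    exact absurd (Finset.subset_empty.mp hsub) hne

lemma IsPartOn.eq_empty_right {P : Finset (Finset ℕ)} {S : Finset ℕ} (hP : IsPartOn P S)
    (hS : P = ∅) : S = ∅ := by
  subst hS
  rcases S.eq_empty_or_nonempty with h | ⟨i, hi⟩
  · exact h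
  · obtain ⟨D, ⟨hD, -⟩, -⟩ := hP.2 i hi
    exact absurd hD (Finset.notMem_empty _)

lemma IsPartOn.trace_self {P : Finset (Finset ℕ)} {S : Finset ℕ} (hP : IsPartOn P S) :
    (P.image (· ∩ S)).erase ∅ = P := by
  have : P.image (· ∩ S) = P := by
    have h : P.image (· ∩ S) = P.image id :=
      Finset.image_congr fun D hD => inter_eq_left.mpr (hP.1 D hD).2
    rw [h, Finset.image_id]
  rw [this, Finset.erase_eq_of_notMem hP.notMem_empty]

lemma trace_empty_right (P : Finset (Finset ℕ)) :
    (P.image (· ∩ (∅ : Finset ℕ))).erase ∅ = ∅ := by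
  ext x
  simp only [Finset.mem_erase, Finset.mem_image, Finset.inter_empty, Finset.notMem_empty,
    iff_false, not_and]
  rintro hx ⟨D, -, rfl⟩
  exact hx rfl

lemma IsPartOn.sup_id {P : Finset (Finset ℕ)} {S : Finset ℕ} (hP : IsPartOn P S) :
    P.sup id = S := by
  apply le_antisymm
  · exact Finset.sup_le fun D hD => (hP.1 D hD).2
  · intro i hi
    obtain ⟨D, ⟨hD, hiD⟩, -⟩ := hP.2 i hi
    exact Finset.le_sup (f := id) hD hiD

lemma IsPartOn.erase {P : Finset (Finset ℕ)} {S : Finset ℕ} (hP : IsPartOn P S)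
    {D : Finset ℕ} (hD : D ∈ P) : IsPartOn (P.erase D) (S \ D) := by
  constructor
  · intro B hB
    rw [Finset.mem_erase] at hB
    refine ⟨(hP.1 B hB.2).1, fun x hx => Finset.mem_sdiff.mpr ⟨(hP.1 B hB.2).2 hx, ?_⟩⟩
    intro hxD
    exact hB.1 (hP.unique hB.2 hD hx hxD)
  · intro i hi
    rw [Finset.mem_sdiff] at hi
    obtain ⟨B, ⟨hB, hiB⟩, hu⟩ := hP.2 i hi.1
    refine ⟨B, ⟨Finset.mem_erase.mpr ⟨fun h => hi.2 (h ▸ hiB), hB⟩, hiB⟩, ?_⟩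
    rintro B' ⟨hB', hiB'⟩
    exact hu B' ⟨Finset.mem_of_mem_erase hB', hiB'⟩

lemma IsPartOn.nonempty_ground {P : Finset (Finset ℕ)} {S : Finset ℕ} (hP : IsPartOn P S)
    (hne : P ≠ ∅) : S.Nonempty := by
  rcases S.eq_empty_or_nonempty with h | h
  · exact absurd (hP.eq_empty_left h) hne
  · exact h

lemma firstBlock_eq {P : Finset (Finset ℕ)} {S : Finset ℕ} (hP : IsPartOn P S)
    (hne : P ≠ ∅) {D : Finset ℕ} (hD : D ∈ P)
    (hmD : S.min' (hP.nonempty_ground hne) ∈ D) : firstBlock P = D := by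
  have hSne := hP.nonempty_ground hne
  have hsup : P.sup id = S := hP.sup_id
  have hDmin : D.min = S.min := by
    apply le_antisymm
    · rw [← Finset.coe_min' hSne]
      exact Finset.min_le hmD
    · exact Finset.le_min fun a ha => Finset.min_le ((hP.1 D hD).2 ha)
  have hfilter : (P.filter fun B => B.min = (P.sup id).min) = {D} := by
    ext B
    rw [Finset.mem_filter, Finset.mem_singleton, hsup]
    constructor
    · rintro ⟨hB, hBmin⟩
      have : S.min' hSne ∈ B := by
        apply Finset.mem_of_min
        rw [hBmin, Finset.coe_min']
      exact hP.unique hB hD this hmD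
    · rintro rfl
      exact ⟨hD, hDmin⟩
  rw [firstBlock, hfilter, Finset.sup_singleton, id]

lemma firstBlock_mem {P : Finset (Finset ℕ)} {S : Finset ℕ} (hP : IsPartOn P S)
    (hne : P ≠ ∅) :
    firstBlock P ∈ P ∧ S.min' (hP.nonempty_ground hne) ∈ firstBlock P := by
  have hSne := hP.nonempty_ground hne
  obtain ⟨D, ⟨hD, hmD⟩, -⟩ := hP.2 _ (S.min'_mem hSne)
  rw [firstBlock_eq hP hne hD hmD]
  exact ⟨hD, hmD⟩

/-- The quasi-shuffle `A ⧢ B` of two set partitions (of disjoint ground sets), defined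
recursively by `A ⧢ ∅ = ∅ ⧢ A = {A}` and
`A ⧢ B = ⋃_{i=0}^{s} { {A₁ ∪ B_i} ∪ E : E ∈ (A∖{A₁}) ⧢ (B∖{B_i}) }` with `B₀ = ∅`,
where `A₁` is the first block of `A`.  (The auxiliary fuel argument, taken to be the
number of blocks of `A`, makes the recursion structural; one block of `A` is consumed
at each step.) -/
def qshuffleAux : ℕ → Finset (Finset ℕ) → Finset (Finset ℕ) → Finset (Finset (Finset ℕ))
  | 0, A, B => if A = ∅ then {B} else if B = ∅ then {A} else ∅
  | k + 1, A, B =>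
    if A = ∅ then {B}
    else if B = ∅ then {A}
    else
      (insert (∅ : Finset ℕ) B).biUnion fun Bi =>
        (qshuffleAux k (A.erase (firstBlock A)) (B.erase Bi)).image
          (insert (firstBlock A ∪ Bi))

/-- The quasi-shuffle `A ⧢ B`. -/
def qshuffle (A B : Finset (Finset ℕ)) : Finset (Finset (Finset ℕ)) :=
  qshuffleAux A.card A B

lemma inter_left_of_subset {D SA SB A₁ Bi : Finset ℕ}
    (hdisj : Disjoint SA SB)
    (hD : D ⊆ (SA \ A₁) ∪ (SB \ Bi)) : D ∩ SA = D ∩ (SA \ A₁) := by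
  ext x
  simp only [Finset.mem_inter, Finset.mem_sdiff]
  constructor
  · rintro ⟨hxD, hxSA⟩
    refine ⟨hxD, hxSA, ?_⟩
    rcases Finset.mem_union.mp (hD hxD) with h | h
    · exact (Finset.mem_sdiff.mp h).2
    · exact absurd (Finset.mem_sdiff.mp h).1
        (fun hSB => Finset.disjoint_left.mp hdisj hxSA hSB)
  · rintro ⟨hxD, hxSA, -⟩
    exact ⟨hxD, hxSA⟩

lemma qshuffleAux_mem_iff :
    ∀ (k : ℕ) (A B : Finset (Finset ℕ)) (SA SB : Finset ℕ),
      A.card = k → Disjoint SA SB → IsPartOn A SA → IsPartOn B SB →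
      ∀ C : Finset (Finset ℕ),
        (C ∈ qshuffleAux k A B ↔
          IsPartOn C (SA ∪ SB) ∧ (C.image (· ∩ SA)).erase ∅ = A ∧
            (C.image (· ∩ SB)).erase ∅ = B) := by
  intro k
  induction k with
  | zero =>
    intro A B SA SB hcard hdisj hA hB C
    have hAe : A = ∅ := Finset.card_eq_zero.mp hcard
    subst hAe
    have hSAe : SA = ∅ := hA.eq_empty_right rfl
    subst hSAe
    simp only [qshuffleAux, eq_self_iff_true, if_true, Finset.mem_singleton, Finset.empty_union]
    constructor
    · rintro rfl
      exact ⟨hB, trace_empty_right _, hB.trace_self⟩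
    · rintro ⟨hC, -, htr⟩
      rw [← htr, hC.trace_self]
  | succ k ih =>
    intro A B SA SB hcard hdisj hA hB C
    have hAne : A ≠ ∅ := by
      intro h; subst h; simp at hcard
    by_cases hBe : B = ∅
    · subst hBe
      have hSBe : SB = ∅ := hB.eq_empty_right rfl
      subst hSBe
      simp only [qshuffleAux, if_neg hAne, eq_self_iff_true, if_true, Finset.mem_singleton, Finset.union_empty]
      constructor
      · rintro rfl
        exact ⟨hA, hA.trace_self, trace_empty_right _⟩
      · rintro ⟨hC, htr, -⟩
        rw [← htr, hC.trace_self]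
    · -- main case
      obtain ⟨hA₁mem, hmA₁⟩ := firstBlock_mem hA hAne
      have hSAne : SA.Nonempty := hA.nonempty_ground hAne
      set m := SA.min' hSAne with hmdef
      set A₁ := firstBlock A with hA₁def
      have hmSA : m ∈ SA := SA.min'_mem hSAne
      have hA₁sub : A₁ ⊆ SA := (hA.1 A₁ hA₁mem).2
      have hA₁ne : A₁ ≠ ∅ := (hA.1 A₁ hA₁mem).1
      have hAerase : IsPartOn (A.erase A₁) (SA \ A₁) := hA.erase hA₁mem
      have hcard' : (A.erase A₁).card = k := by
        rw [Finset.card_erase_of_mem hA₁mem, hcard]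
        omega
      simp only [qshuffleAux, if_neg hAne, if_neg hBe, Finset.mem_biUnion, Finset.mem_image,
        ← hA₁def]
      constructor
      · rintro ⟨Bi, hBimem, E, hE, rfl⟩
        have hBisub : Bi ⊆ SB := by
          rcases Finset.mem_insert.mp hBimem with rfl | h
          · exact Finset.empty_subset _
          · exact (hB.1 Bi h).2
        have hBerase : IsPartOn (B.erase Bi) (SB \ Bi) := by
          rcases Finset.mem_insert.mp hBimem with rfl | h
          · rw [Finset.erase_eq_of_notMem hB.notMem_empty, Finset.sdiff_empty]; exact hB
          · exact hB.erase h
        have hdisj' : Disjoint (SA \ A₁) (SB \ Bi) :=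
          hdisj.mono Finset.sdiff_subset Finset.sdiff_subset
        rw [ih _ _ _ _ hcard' hdisj' hAerase hBerase] at hE
        obtain ⟨hEpart, hEtrA, hEtrB⟩ := hE
        have hEsub : ∀ D ∈ E, D ⊆ (SA \ A₁) ∪ (SB \ Bi) := fun D hD => (hEpart.1 D hD).2
        have hsep : ∀ x ∈ A₁ ∪ Bi, x ∉ (SA \ A₁) ∪ (SB \ Bi) := by
          intro x hx hx'
          rcases Finset.mem_union.mp hx with h | h
          · rcases Finset.mem_union.mp hx' with h' | h'
            · exact (Finset.mem_sdiff.mp h').2 h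
            · exact Finset.disjoint_left.mp hdisj (hA₁sub h) (Finset.mem_sdiff.mp h').1
          · rcases Finset.mem_union.mp hx' with h' | h'
            · exact Finset.disjoint_left.mp hdisj (Finset.mem_sdiff.mp h').1 (hBisub h)
            · exact (Finset.mem_sdiff.mp h').2 h
        have hD₀sub : A₁ ∪ Bi ⊆ SA ∪ SB := Finset.union_subset_union hA₁sub hBisub
        have hD₀ne : A₁ ∪ Bi ≠ ∅ := by
          intro h
          exact hA₁ne (Finset.subset_empty.mp (h ▸ Finset.subset_union_left))
        have hD₀SA : (A₁ ∪ Bi) ∩ SA = A₁ := by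
          rw [Finset.union_inter_distrib_right, Finset.inter_eq_left.mpr hA₁sub,
            Finset.disjoint_iff_inter_eq_empty.mp (hdisj.symm.mono_left hBisub),
            Finset.union_empty]
        have hD₀SB : (A₁ ∪ Bi) ∩ SB = Bi := by
          rw [Finset.union_inter_distrib_right, Finset.inter_eq_left.mpr hBisub,
            Finset.disjoint_iff_inter_eq_empty.mp (hdisj.mono_left hA₁sub),
            Finset.empty_union]
        have himgA : E.image (· ∩ SA) = E.image (· ∩ (SA \ A₁)) :=
          Finset.image_congr fun D hD => inter_left_of_subset hdisj (hEsub D hD)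
        have himgB : E.image (· ∩ SB) = E.image (· ∩ (SB \ Bi)) :=
          Finset.image_congr fun D hD => inter_left_of_subset hdisj.symm
            (by rw [Finset.union_comm]; exact hEsub D hD)
        refine ⟨⟨?_, ?_⟩, ?_, ?_⟩
        · intro D hD
          rcases Finset.mem_insert.mp hD with rfl | hDE
          · exact ⟨hD₀ne, hD₀sub⟩
          · exact ⟨(hEpart.1 D hDE).1, (hEsub D hDE).trans
              (Finset.union_subset_union Finset.sdiff_subset Finset.sdiff_subset)⟩
        · intro i hi
          by_cases hiD₀ : i ∈ A₁ ∪ Bi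
          · refine ⟨A₁ ∪ Bi, ⟨Finset.mem_insert_self _ _, hiD₀⟩, ?_⟩
            rintro D ⟨hD, hiD⟩
            rcases Finset.mem_insert.mp hD with rfl | hDE
            · rfl
            · exact absurd (hEsub D hDE hiD) (hsep i hiD₀)
          · have hi' : i ∈ (SA \ A₁) ∪ (SB \ Bi) := by
              rcases Finset.mem_union.mp hi with h | h
              · exact Finset.mem_union_left _ (Finset.mem_sdiff.mpr
                  ⟨h, fun hc => hiD₀ (Finset.mem_union_left _ hc)⟩)
              · exact Finset.mem_union_right _ (Finset.mem_sdiff.mpr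
                  ⟨h, fun hc => hiD₀ (Finset.mem_union_right _ hc)⟩)
            obtain ⟨D, ⟨hDE, hiD⟩, hu⟩ := hEpart.2 i hi'
            refine ⟨D, ⟨Finset.mem_insert_of_mem hDE, hiD⟩, ?_⟩
            rintro D' ⟨hD', hiD'⟩
            rcases Finset.mem_insert.mp hD' with rfl | hD'E
            · exact absurd hiD' hiD₀
            · exact hu D' ⟨hD'E, hiD'⟩
        · rw [Finset.image_insert, hD₀SA, himgA, Finset.erase_insert_of_ne hA₁ne, hEtrA,
            Finset.insert_erase hA₁mem]
        · rcases Finset.mem_insert.mp hBimem with rfl | hBiB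
          · rw [Finset.image_insert, hD₀SB, himgB, Finset.erase_insert_eq_erase, hEtrB,
              Finset.erase_eq_of_notMem hB.notMem_empty]
          · rw [Finset.image_insert, hD₀SB, himgB,
              Finset.erase_insert_of_ne (hB.1 Bi hBiB).1, hEtrB, Finset.insert_erase hBiB]
      · rintro ⟨hC, htrA, htrB⟩
        have hmU : m ∈ SA ∪ SB := Finset.mem_union_left _ hmSA
        obtain ⟨D₀, ⟨hD₀C, hmD₀⟩, hu₀⟩ := hC.2 m hmU
        have hD₀subU : D₀ ⊆ SA ∪ SB := (hC.1 D₀ hD₀C).2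
        have htrA' : D₀ ∩ SA ∈ A := by
          rw [← htrA]
          exact Finset.mem_erase.mpr
            ⟨Finset.ne_empty_of_mem (Finset.mem_inter.mpr ⟨hmD₀, hmSA⟩),
              Finset.mem_image_of_mem _ hD₀C⟩
        have hD₀A₁ : D₀ ∩ SA = A₁ :=
          (firstBlock_eq hA hAne htrA' (Finset.mem_inter.mpr ⟨hmD₀, hmSA⟩)).symm
        set Bi := D₀ ∩ SB with hBidef
        have hBimem : Bi ∈ insert ∅ B := by
          by_cases h : Bi = ∅
          · rw [h]; exact Finset.mem_insert_self _ _
          · refine Finset.mem_insert_of_mem ?_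
            rw [← htrB]
            exact Finset.mem_erase.mpr ⟨h, Finset.mem_image_of_mem _ hD₀C⟩
        have hBisub : Bi ⊆ SB := Finset.inter_subset_right
        have hD₀eq : D₀ = A₁ ∪ Bi := by
          rw [← hD₀A₁, hBidef, ← Finset.inter_union_distrib_left,
            Finset.inter_eq_left.mpr hD₀subU]
        set E := C.erase D₀ with hEdef
        have hEsub : ∀ D ∈ E, D ⊆ (SA \ A₁) ∪ (SB \ Bi) := by
          intro D hD x hx
          have hDC := (Finset.mem_erase.mp hD).2
          have hDne := (Finset.mem_erase.mp hD).1
          have hxU : x ∈ SA ∪ SB := (hC.1 D hDC).2 hx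
          have hxD₀ : x ∉ D₀ := fun hxD₀ => hDne (hC.unique hDC hD₀C hx hxD₀)
          rcases Finset.mem_union.mp hxU with h | h
          · exact Finset.mem_union_left _ (Finset.mem_sdiff.mpr
              ⟨h, fun hA₁x => hxD₀ (Finset.inter_subset_left (hD₀A₁.symm ▸ hA₁x))⟩)
          · exact Finset.mem_union_right _ (Finset.mem_sdiff.mpr
              ⟨h, fun hBix => hxD₀ (Finset.inter_subset_left (hBidef ▸ hBix))⟩)
        have himgA : ∀ D ∈ E, D ∩ SA = D ∩ (SA \ A₁) :=
          fun D hD => inter_left_of_subset hdisj (hEsub D hD)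
        have himgB : ∀ D ∈ E, D ∩ SB = D ∩ (SB \ Bi) :=
          fun D hD => inter_left_of_subset hdisj.symm
            (by rw [Finset.union_comm]; exact hEsub D hD)
        have hEpart : IsPartOn E ((SA \ A₁) ∪ (SB \ Bi)) := by
          constructor
          · intro D hD
            exact ⟨(hC.1 D (Finset.mem_erase.mp hD).2).1, hEsub D hD⟩
          · intro i hi
            have hiU : i ∈ SA ∪ SB := by
              rcases Finset.mem_union.mp hi with h | h
              · exact Finset.mem_union_left _ (Finset.mem_sdiff.mp h).1
              · exact Finset.mem_union_right _ (Finset.mem_sdiff.mp h).1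
            have hiD₀ : i ∉ D₀ := by
              rw [hD₀eq]
              intro hc
              rcases Finset.mem_union.mp hc with h | h
              · rcases Finset.mem_union.mp hi with h' | h'
                · exact (Finset.mem_sdiff.mp h').2 h
                · exact Finset.disjoint_left.mp hdisj (hA₁sub h) (Finset.mem_sdiff.mp h').1
              · rcases Finset.mem_union.mp hi with h' | h'
                · exact Finset.disjoint_left.mp hdisj (Finset.mem_sdiff.mp h').1 (hBisub h)
                · exact (Finset.mem_sdiff.mp h').2 h
            obtain ⟨D, ⟨hDC, hiD⟩, hu⟩ := hC.2 i hiU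
            refine ⟨D, ⟨Finset.mem_erase.mpr ⟨fun h => hiD₀ (h ▸ hiD), hDC⟩, hiD⟩, ?_⟩
            rintro D' ⟨hD', hiD'⟩
            exact hu D' ⟨(Finset.mem_erase.mp hD').2, hiD'⟩
        have hEtrA : (E.image (· ∩ (SA \ A₁))).erase ∅ = A.erase A₁ := by
          ext x
          simp only [Finset.mem_erase, Finset.mem_image]
          constructor
          · rintro ⟨hxne, D, hDE, rfl⟩
            have h1 : D ∩ SA = D ∩ (SA \ A₁) := himgA D hDE
            refine ⟨?_, ?_⟩
            · intro hcontr
              have hm' : m ∈ D ∩ (SA \ A₁) := hcontr.symm ▸ hmA₁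
              exact (Finset.mem_sdiff.mp (Finset.mem_inter.mp hm').2).2 hmA₁
            · rw [← htrA, ← h1]
              exact Finset.mem_erase.mpr ⟨by rw [h1]; exact hxne,
                Finset.mem_image_of_mem _ (Finset.mem_erase.mp hDE).2⟩
          · rintro ⟨hxA₁, hxA⟩
            rw [← htrA] at hxA
            obtain ⟨hxne, hxim⟩ := Finset.mem_erase.mp hxA
            obtain ⟨D, hDC, rfl⟩ := Finset.mem_image.mp hxim
            have hDne : D ≠ D₀ := by
              intro h
              exact hxA₁ (by rw [h, hD₀A₁])
            have hDE : D ∈ E := Finset.mem_erase.mpr ⟨hDne, hDC⟩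
            exact ⟨hxne, D, hDE, (himgA D hDE).symm⟩
        have hEtrB : (E.image (· ∩ (SB \ Bi))).erase ∅ = B.erase Bi := by
          ext x
          simp only [Finset.mem_erase, Finset.mem_image]
          constructor
          · rintro ⟨hxne, D, hDE, rfl⟩
            have h1 : D ∩ SB = D ∩ (SB \ Bi) := himgB D hDE
            refine ⟨?_, ?_⟩
            · intro hcontr
              obtain ⟨y, hy⟩ := Finset.nonempty_iff_ne_empty.mpr hxne
              have hyBi : y ∈ Bi := hcontr ▸ hy
              exact (Finset.mem_sdiff.mp (Finset.mem_inter.mp hy).2).2 hyBi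
            · rw [← htrB, ← h1]
              exact Finset.mem_erase.mpr ⟨by rw [h1]; exact hxne,
                Finset.mem_image_of_mem _ (Finset.mem_erase.mp hDE).2⟩
          · rintro ⟨hxBi, hxB⟩
            rw [← htrB] at hxB
            obtain ⟨hxne, hxim⟩ := Finset.mem_erase.mp hxB
            obtain ⟨D, hDC, rfl⟩ := Finset.mem_image.mp hxim
            have hDne : D ≠ D₀ := by
              intro h
              exact hxBi (by rw [h, ← hBidef])
            have hDE : D ∈ E := Finset.mem_erase.mpr ⟨hDne, hDC⟩
            exact ⟨hxne, D, hDE, (himgB D hDE).symm⟩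
        have hBerase : IsPartOn (B.erase Bi) (SB \ Bi) := by
          rcases Finset.mem_insert.mp hBimem with h | h
          · rw [h, Finset.erase_eq_of_notMem hB.notMem_empty, Finset.sdiff_empty]
            exact hB
          · exact hB.erase h
        have hdisj' : Disjoint (SA \ A₁) (SB \ Bi) :=
          hdisj.mono Finset.sdiff_subset Finset.sdiff_subset
        have hEmem : E ∈ qshuffleAux k (A.erase A₁) (B.erase Bi) := by
          rw [ih _ _ _ _ hcard' hdisj' hAerase hBerase]
          exact ⟨hEpart, hEtrA, hEtrB⟩
        exact ⟨Bi, hBimem, E, hEmem, by rw [← hD₀eq, hEdef, Finset.insert_erase hD₀C]⟩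

/-- `m_A := Σ_{z : τ(z) = A} ι(z 0)⋯ι(z (d−1))` in the free algebra, where the type
`τ(z)` of `z : Fin d → Fin n` is taken as a set partition of `{1,…,d}` (the fibers of
`z`, written 1-based).  By construction `m_C = 0` when `C` has more than `n` blocks. -/
noncomputable def mPartN (n d : ℕ) (P : Finset (Finset ℕ)) : FreeAlgebra ℚ (Fin n) :=
  ∑ z ∈ Finset.univ.filter
      (fun z : Fin d → Fin n =>
        ((Finset.univ.image fun x =>
            (Finset.univ.filter fun i : Fin d => z i = x).image
              (fun i : Fin d => (i : ℕ) + 1)).erase ∅) = P),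
    ((List.finRange d).map fun i => FreeAlgebra.ι ℚ (z i)).prod

/-- The type of `z`. -/
def tauP (n d : ℕ) (z : Fin d → Fin n) : Finset (Finset ℕ) :=
  ((Finset.univ.image fun x =>
      (Finset.univ.filter fun i : Fin d => z i = x).image
        (fun i : Fin d => (i : ℕ) + 1)).erase ∅)

lemma mPartN_eq (n d : ℕ) (P : Finset (Finset ℕ)) :
    mPartN n d P = ∑ z ∈ Finset.univ.filter (fun z : Fin d → Fin n => tauP n d z = P),
      ((List.finRange d).map fun i => FreeAlgebra.ι ℚ (z i)).prod := rfl

lemma tauP_partOn (n d : ℕ) (z : Fin d → Fin n) :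
    IsPartOn (tauP n d z) (Finset.Icc 1 d) := by
  constructor
  · intro D hD
    obtain ⟨hne, hmem⟩ := Finset.mem_erase.mp hD
    obtain ⟨x, -, rfl⟩ := Finset.mem_image.mp hmem
    refine ⟨hne, ?_⟩
    intro a ha
    obtain ⟨i, -, rfl⟩ := Finset.mem_image.mp ha
    have := i.isLt
    rw [Finset.mem_Icc]
    omega
  · intro j hj
    rw [Finset.mem_Icc] at hj
    have hjd : j - 1 < d := by omega
    have hji : ((⟨j - 1, hjd⟩ : Fin d) : ℕ) + 1 = j := by simp; omega
    have hjmem : j ∈ (Finset.univ.filter fun i' : Fin d => z i' = z ⟨j - 1, hjd⟩).image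
        (fun i' : Fin d => (i' : ℕ) + 1) :=
      Finset.mem_image.mpr ⟨⟨j - 1, hjd⟩, Finset.mem_filter.mpr ⟨Finset.mem_univ _, rfl⟩, hji⟩
    refine ⟨(Finset.univ.filter fun i' : Fin d => z i' = z ⟨j - 1, hjd⟩).image
        (fun i' : Fin d => (i' : ℕ) + 1), ⟨?_, hjmem⟩, ?_⟩
    · exact Finset.mem_erase.mpr ⟨Finset.ne_empty_of_mem hjmem,
        Finset.mem_image_of_mem _ (Finset.mem_univ (z ⟨j - 1, hjd⟩))⟩
    · rintro D' ⟨hD', hjD'⟩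
      obtain ⟨-, hD'img⟩ := Finset.mem_erase.mp hD'
      obtain ⟨x, -, rfl⟩ := Finset.mem_image.mp hD'img
      obtain ⟨i', hi'f, hi'j⟩ := Finset.mem_image.mp hjD'
      have hii : i' = ⟨j - 1, hjd⟩ := Fin.ext (show (i' : ℕ) = j - 1 by omega)
      have hx : z ⟨j - 1, hjd⟩ = x := by rw [← hii]; exact (Finset.mem_filter.mp hi'f).2
      rw [hx]

lemma fiber_append {c e n : ℕ} (z : Fin c → Fin n) (w : Fin e → Fin n) (x : Fin n) :
    ((Finset.univ.filter fun i : Fin (c + e) => Fin.append z w i = x).image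
        (fun i : Fin (c + e) => (i : ℕ) + 1))
      = ((Finset.univ.filter fun i : Fin c => z i = x).image (fun i : Fin c => (i : ℕ) + 1))
        ∪ (((Finset.univ.filter fun i : Fin e => w i = x).image
            (fun i : Fin e => (i : ℕ) + 1)).image (· + c)) := by
  ext a
  simp only [Finset.mem_union, Finset.mem_image, Finset.mem_filter, Finset.mem_univ, true_and]
  constructor
  · rintro ⟨i, hix, rfl⟩
    by_cases h : (i : ℕ) < c
    · left
      refine ⟨⟨(i : ℕ), h⟩, ?_, rfl⟩
      have hic : Fin.castAdd e ⟨(i : ℕ), h⟩ = i := Fin.ext rfl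
      rw [← Fin.append_left z w ⟨(i : ℕ), h⟩, hic]
      exact hix
    · right
      have h2 : (i : ℕ) - c < e := by have := i.isLt; omega
      have hic : Fin.natAdd c ⟨(i : ℕ) - c, h2⟩ = i :=
        Fin.ext (show c + ((i : ℕ) - c) = (i : ℕ) by omega)
      refine ⟨(i : ℕ) - c + 1, ⟨⟨(i : ℕ) - c, h2⟩, ?_, rfl⟩, by omega⟩
      rw [← Fin.append_right z w ⟨(i : ℕ) - c, h2⟩, hic]
      exact hix
  · rintro (⟨i, hix, rfl⟩ | ⟨b, ⟨j, hjx, rfl⟩, rfl⟩)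
    · exact ⟨Fin.castAdd e i, by rw [Fin.append_left]; exact hix, by rw [Fin.coe_castAdd]⟩
    · exact ⟨Fin.natAdd c j, by rw [Fin.append_right]; exact hjx,
        by rw [Fin.coe_natAdd]; omega⟩

lemma tau_trace_left {c e n : ℕ} (z : Fin c → Fin n) (w : Fin e → Fin n) :
    ((tauP n (c + e) (Fin.append z w)).image (· ∩ Finset.Icc 1 c)).erase ∅ = tauP n c z := by
  have hkey : ∀ x : Fin n,
      ((Finset.univ.filter fun i : Fin (c + e) => Fin.append z w i = x).image
          (fun i : Fin (c + e) => (i : ℕ) + 1)) ∩ Finset.Icc 1 c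
        = (Finset.univ.filter fun i : Fin c => z i = x).image (fun i : Fin c => (i : ℕ) + 1) := by
    intro x
    rw [fiber_append, Finset.union_inter_distrib_right]
    have h1 : ((Finset.univ.filter fun i : Fin c => z i = x).image
        (fun i : Fin c => (i : ℕ) + 1)) ∩ Finset.Icc 1 c
        = (Finset.univ.filter fun i : Fin c => z i = x).image (fun i : Fin c => (i : ℕ) + 1) := by
      apply Finset.inter_eq_left.mpr
      intro a ha
      obtain ⟨i, -, rfl⟩ := Finset.mem_image.mp ha
      have := i.isLt
      rw [Finset.mem_Icc]
      omega
    have h2 : (((Finset.univ.filter fun i : Fin e => w i = x).image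
        (fun i : Fin e => (i : ℕ) + 1)).image (· + c)) ∩ Finset.Icc 1 c = ∅ := by
      rw [Finset.eq_empty_iff_forall_notMem]
      intro a ha
      obtain ⟨ha1, ha2⟩ := Finset.mem_inter.mp ha
      obtain ⟨b, hb, rfl⟩ := Finset.mem_image.mp ha1
      obtain ⟨j, -, rfl⟩ := Finset.mem_image.mp hb
      rw [Finset.mem_Icc] at ha2
      omega
    rw [h1, h2, Finset.union_empty]
  ext D
  simp only [tauP, Finset.mem_erase, Finset.mem_image]
  constructor
  · rintro ⟨hDne, D', ⟨-, x, -, rfl⟩, rfl⟩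
    rw [hkey x] at hDne ⊢
    exact ⟨hDne, x, Finset.mem_univ x, rfl⟩
  · rintro ⟨hDne, x, -, rfl⟩
    refine ⟨hDne, (Finset.univ.filter fun i : Fin (c + e) => Fin.append z w i = x).image
        (fun i : Fin (c + e) => (i : ℕ) + 1), ⟨?_, x, Finset.mem_univ x, rfl⟩, hkey x⟩
    intro hc
    apply hDne
    rw [← hkey x, hc, Finset.empty_inter]

lemma tau_trace_right {c e n : ℕ} (z : Fin c → Fin n) (w : Fin e → Fin n) :
    ((tauP n (c + e) (Fin.append z w)).image (· ∩ Finset.Icc (c + 1) (c + e))).erase ∅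
      = shiftP (tauP n e w) c := by
  have hkey : ∀ x : Fin n,
      ((Finset.univ.filter fun i : Fin (c + e) => Fin.append z w i = x).image
          (fun i : Fin (c + e) => (i : ℕ) + 1)) ∩ Finset.Icc (c + 1) (c + e)
        = ((Finset.univ.filter fun i : Fin e => w i = x).image
            (fun i : Fin e => (i : ℕ) + 1)).image (· + c) := by
    intro x
    rw [fiber_append, Finset.union_inter_distrib_right]
    have h1 : ((Finset.univ.filter fun i : Fin c => z i = x).image
        (fun i : Fin c => (i : ℕ) + 1)) ∩ Finset.Icc (c + 1) (c + e) = ∅ := by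
      rw [Finset.eq_empty_iff_forall_notMem]
      intro a ha
      obtain ⟨ha1, ha2⟩ := Finset.mem_inter.mp ha
      obtain ⟨i, -, rfl⟩ := Finset.mem_image.mp ha1
      have := i.isLt
      rw [Finset.mem_Icc] at ha2
      omega
    have h2 : (((Finset.univ.filter fun i : Fin e => w i = x).image
        (fun i : Fin e => (i : ℕ) + 1)).image (· + c)) ∩ Finset.Icc (c + 1) (c + e)
        = ((Finset.univ.filter fun i : Fin e => w i = x).image
            (fun i : Fin e => (i : ℕ) + 1)).image (· + c) := by
      apply Finset.inter_eq_left.mpr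
      intro a ha
      obtain ⟨b, hb, rfl⟩ := Finset.mem_image.mp ha
      obtain ⟨j, -, rfl⟩ := Finset.mem_image.mp hb
      have := j.isLt
      rw [Finset.mem_Icc]
      omega
    rw [h1, h2, Finset.empty_union]
  ext D
  simp only [tauP, shiftP, Finset.mem_erase, Finset.mem_image]
  constructor
  · rintro ⟨hDne, D', ⟨-, x, -, rfl⟩, rfl⟩
    rw [hkey x] at hDne ⊢
    refine ⟨(Finset.univ.filter fun i : Fin e => w i = x).image
        (fun i : Fin e => (i : ℕ) + 1), ⟨?_, x, Finset.mem_univ x, rfl⟩, rfl⟩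
    intro hc
    apply hDne
    rw [hc, Finset.image_empty]
  · rintro ⟨y, ⟨hyne, x, -, rfl⟩, rfl⟩
    refine ⟨?_, (Finset.univ.filter fun i : Fin (c + e) => Fin.append z w i = x).image
        (fun i : Fin (c + e) => (i : ℕ) + 1), ⟨?_, x, Finset.mem_univ x, rfl⟩, hkey x⟩
    · intro hc
      rw [Finset.image_eq_empty] at hc
      exact hyne hc
    · intro hc
      apply hyne
      have := hkey x
      rw [hc, Finset.empty_inter] at this
      rw [← Finset.image_eq_empty (f := (· + c))]
      exact this.symm

lemma shiftP_partOn {B : Finset (Finset ℕ)} {e : ℕ} (hB : IsPartOn B (Finset.Icc 1 e))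
    (c : ℕ) : IsPartOn (shiftP B c) (Finset.Icc (c + 1) (c + e)) := by
  constructor
  · intro D hD
    obtain ⟨D₀, hD₀, rfl⟩ := Finset.mem_image.mp hD
    constructor
    · intro hc
      rw [Finset.image_eq_empty] at hc
      exact (hB.1 D₀ hD₀).1 hc
    · intro a ha
      obtain ⟨b, hb, rfl⟩ := Finset.mem_image.mp ha
      have := (hB.1 D₀ hD₀).2 hb
      rw [Finset.mem_Icc] at this ⊢
      omega
  · intro i hi
    rw [Finset.mem_Icc] at hi
    have hib : i - c ∈ Finset.Icc 1 e := by rw [Finset.mem_Icc]; omega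
    obtain ⟨D, ⟨hD, hiD⟩, hu⟩ := hB.2 (i - c) hib
    refine ⟨D.image (· + c), ⟨Finset.mem_image_of_mem _ hD, ?_⟩, ?_⟩
    · exact Finset.mem_image.mpr ⟨i - c, hiD, by omega⟩
    · rintro D' ⟨hD', hiD'⟩
      obtain ⟨D₀, hD₀, rfl⟩ := Finset.mem_image.mp hD'
      obtain ⟨b, hb, hbc⟩ := Finset.mem_image.mp hiD'
      have hbe : b = i - c := by omega
      rw [hu D₀ ⟨hD₀, hbe ▸ hb⟩]

lemma shiftP_inj {P Q : Finset (Finset ℕ)} {c : ℕ} (h : shiftP P c = shiftP Q c) : P = Q := by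
  have hinj : Function.Injective (fun B : Finset ℕ => B.image (· + c)) :=
    Finset.image_injective (fun a b hab => by simpa using hab)
  exact Finset.image_injective hinj h

/-- For set partitions `A` of `{1,…,c}` and `B` of `{1,…,e}`, each with at most `n`
blocks, `m_A · m_B = Σ_{C ∈ A ⧢ B} m_C` in the free algebra (with `m_C = 0` when `C`
has more than `n` blocks). -/
theorem stmt18 (n : ℕ) (hn : 1 ≤ n) (c e : ℕ) (A B : Finset (Finset ℕ))
    (hA : IsPartitionOf A c) (hB : IsPartitionOf B e)
    (hAn : A.card ≤ n) (hBn : B.card ≤ n) :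
    mPartN n c A * mPartN n e B =
      ∑ C ∈ qshuffle A (shiftP B c), mPartN n (c + e) C := by
  classical
  have hA' : IsPartOn A (Finset.Icc 1 c) := hA
  have hB' : IsPartOn B (Finset.Icc 1 e) := hB
  have hdisj : Disjoint (Finset.Icc 1 c) (Finset.Icc (c + 1) (c + e)) := by
    rw [Finset.disjoint_left]
    intro a ha hb
    rw [Finset.mem_Icc] at ha hb
    omega
  have hBs : IsPartOn (shiftP B c) (Finset.Icc (c + 1) (c + e)) := shiftP_partOn hB' c
  have hunion : Finset.Icc 1 c ∪ Finset.Icc (c + 1) (c + e) = Finset.Icc 1 (c + e) := by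
    ext a
    simp only [Finset.mem_union, Finset.mem_Icc]
    omega
  have key : ∀ u : Fin (c + e) → Fin n,
      (tauP n (c + e) u ∈ qshuffle A (shiftP B c) ↔
        (tauP n c (fun i => u (Fin.castAdd e i)) = A ∧
          tauP n e (fun j => u (Fin.natAdd c j)) = B)) := by
    intro u
    set z : Fin c → Fin n := fun i => u (Fin.castAdd e i) with hz
    set w : Fin e → Fin n := fun j => u (Fin.natAdd c j) with hw
    have hu : Fin.append z w = u := Fin.append_castAdd_natAdd
    rw [qshuffle, qshuffleAux_mem_iff A.card A (shiftP B c) _ _ rfl hdisj hA' hBs, ← hu]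
    constructor
    · rintro ⟨-, h1, h2⟩
      rw [tau_trace_left] at h1
      rw [tau_trace_right] at h2
      exact ⟨h1, shiftP_inj h2⟩
    · rintro ⟨h1, h2⟩
      refine ⟨?_, ?_, ?_⟩
      · rw [hunion]
        exact tauP_partOn n (c + e) _
      · rw [tau_trace_left]
        exact h1
      · rw [tau_trace_right, h2]
  have hR : (∑ C ∈ qshuffle A (shiftP B c), mPartN n (c + e) C)
      = ∑ u ∈ Finset.univ.filter (fun u : Fin (c + e) → Fin n =>
            tauP n (c + e) u ∈ qshuffle A (shiftP B c)),
          ((List.finRange (c + e)).map fun i => FreeAlgebra.ι ℚ (u i)).prod := by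
    rw [← Finset.sum_fiberwise_eq_sum_filter Finset.univ (qshuffle A (shiftP B c))
      (tauP n (c + e)) _]
    exact Finset.sum_congr rfl fun C _ => mPartN_eq n (c + e) C
  rw [hR]
  have hfilter : Finset.univ.filter (fun u : Fin (c + e) → Fin n =>
        tauP n (c + e) u ∈ qshuffle A (shiftP B c))
      = Finset.univ.filter (fun u : Fin (c + e) → Fin n =>
          tauP n c (fun i => u (Fin.castAdd e i)) = A ∧
            tauP n e (fun j => u (Fin.natAdd c j)) = B) :=
    Finset.filter_congr fun u _ => by rw [key u]
  rw [hfilter, mPartN_eq, mPartN_eq, Finset.sum_mul_sum, ← Finset.sum_product']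
  have hzl : ∀ (z : Fin c → Fin n) (w : Fin e → Fin n),
      (fun i => Fin.append z w (Fin.castAdd e i)) = z :=
    fun z w => funext fun i => Fin.append_left z w i
  have hzr : ∀ (z : Fin c → Fin n) (w : Fin e → Fin n),
      (fun j => Fin.append z w (Fin.natAdd c j)) = w :=
    fun z w => funext fun j => Fin.append_right z w j
  apply Finset.sum_nbij' (i := fun p : (Fin c → Fin n) × (Fin e → Fin n) => Fin.append p.1 p.2)
    (j := fun u : Fin (c + e) → Fin n =>
      (fun i => u (Fin.castAdd e i), fun j => u (Fin.natAdd c j)))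
  · rintro ⟨z, w⟩ hp
    rw [Finset.mem_product] at hp
    obtain ⟨hz, hw⟩ := hp
    rw [Finset.mem_filter] at hz hw ⊢
    exact ⟨Finset.mem_univ _, by rw [hzl z w]; exact hz.2, by rw [hzr z w]; exact hw.2⟩
  · intro u hu
    rw [Finset.mem_filter] at hu
    rw [Finset.mem_product, Finset.mem_filter, Finset.mem_filter]
    exact ⟨⟨Finset.mem_univ _, hu.2.1⟩, ⟨Finset.mem_univ _, hu.2.2⟩⟩
  · rintro ⟨z, w⟩ -
    exact Prod.ext (hzl z w) (hzr z w)
  · rintro u -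
    exact Fin.append_castAdd_natAdd
  · rintro ⟨z, w⟩ -
    show _ = ((List.finRange (c + e)).map fun i => FreeAlgebra.ι ℚ (Fin.append z w i)).prod
    simp only [← List.ofFn_eq_map]
    rw [List.ofFn_add, List.prod_append]
    congr 1
    · exact congrArg (fun l => List.prod l) (congrArg List.ofFn (funext fun i =>
        (congrArg (FreeAlgebra.ι ℚ) (Fin.append_left z w i)).symm))
    · exact congrArg (fun l => List.prod l) (congrArg List.ofFn (funext fun j =>
        (congrArg (FreeAlgebra.ι ℚ) (Fin.append_right z w j)).symm))
end
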